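/- arXiv:1907.08385 — 6 statements merged into one kernel-verified Lean document; each statement's English description precedes it below -/
import Mathlib

section
/- Let D be a digraph of order n ≥ 3 containing a directed cycle C of length m with 2 ≤ m ≤ n−1, and let x be a vertex not on C. If d(x, V(C)) ≥ m+1, then D contains a directed cycle of length k for every k with 2 ≤ k ≤ m+1. -/
variable {V : Type} [Fintype V] [DecidableEq V]

/-- Two distinct vertices are adjacent if there is an arc in at least one direction. -/
def DAdj (A : V → V → Prop) (x y : V) : Prop := A x y ∨ A y x

/-- Out-degree. -/
def outDeg (A : V → V → Prop) [DecidableRel A] (x : V) : ℕ :=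
  (Finset.univ.filter fun y => A x y).card

/-- In-degree. -/
def inDeg (A : V → V → Prop) [DecidableRel A] (x : V) : ℕ :=
  (Finset.univ.filter fun y => A y x).card

/-- Total degree d(x) = d⁺(x) + d⁻(x). -/
def deg (A : V → V → Prop) [DecidableRel A] (x : V) : ℕ :=
  outDeg A x + inDeg A x

/-- d(x, S): number of arcs between x and S, in both directions. -/
def degOn (A : V → V → Prop) [DecidableRel A] (x : V) (S : Finset V) : ℕ :=
  (S.filter fun y => A x y).card + (S.filter fun y => A y x).card

/-- Strong connectivity within a set S: any two vertices of S are joined by a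
directed path all of whose vertices lie in S. -/
def StrongOn (A : V → V → Prop) (S : Set V) : Prop :=
  ∀ u ∈ S, ∀ v ∈ S, Relation.ReflTransGen (fun a b => a ∈ S ∧ b ∈ S ∧ A a b) u v

/-- Strongly connected digraph. -/
def DStrong (A : V → V → Prop) : Prop := StrongOn A Set.univ

/-- 2-strongly connected digraph. -/
def TwoStrong (A : V → V → Prop) : Prop :=
  3 ≤ Fintype.card V ∧ ∀ w : V, StrongOn A {v | v ≠ w}

/-- A directed simple cycle of length m, given as an injective map from `ZMod m`
with consecutive vertices joined by arcs. -/
def IsCycle (A : V → V → Prop) (m : ℕ) (f : ZMod m → V) : Prop :=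
  2 ≤ m ∧ Function.Injective f ∧ ∀ i : ZMod m, A (f i) (f (i + 1))

/-- Hamiltonian digraph: a cycle through all vertices. -/
def Hamiltonian (A : V → V → Prop) : Prop :=
  ∃ f : ZMod (Fintype.card V) → V, IsCycle A (Fintype.card V) f

/-- A Hamiltonian path: a directed path through all vertices. -/
def HamPath (A : V → V → Prop) : Prop :=
  ∃ p : Fin (Fintype.card V) → V, Function.Injective p ∧
    ∀ i : Fin (Fintype.card V), ∀ h : i.val + 1 < Fintype.card V,
      A (p i) (p ⟨i.val + 1, h⟩)

/-- Condition (M): the degree sums over any two distinct pairs of non-adjacent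
vertices total at least 4n - 3. -/
def CondM (A : V → V → Prop) [DecidableRel A] : Prop :=
  ∀ x y w z : V, x ≠ y → w ≠ z → ¬ DAdj A x y → ¬ DAdj A w z →
    ({x, y} : Finset V) ≠ ({w, z} : Finset V) →
    4 * Fintype.card V - 3 ≤ deg A x + deg A y + deg A w + deg A z

/-- Lemma 3.1: if D has order n ≥ 3, a cycle C of length m with
2 ≤ m ≤ n-1, and a vertex x off C with d(x, V(C)) ≥ m+1, then D has cycles of
all lengths 2, …, m+1. -/
theorem statement_1 (A : V → V → Prop) [DecidableRel A]
    (hloop : ∀ v : V, ¬ A v v)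
    (hn : 3 ≤ Fintype.card V)
    (m : ℕ) [NeZero m] (f : ZMod m → V)
    (hC : IsCycle A m f)
    (hm : 2 ≤ m ∧ m ≤ Fintype.card V - 1)
    (x : V) (hx : ∀ i : ZMod m, f i ≠ x)
    (hdeg : m + 1 ≤ degOn A x (Finset.univ.image f)) :
    ∀ k : ℕ, 2 ≤ k → k ≤ m + 1 → ∃ g : ZMod k → V, IsCycle A k g := by
  obtain ⟨hm2, hfinj, harc⟩ := hC
  intro k hk2 hk
  haveI : NeZero k := ⟨by omega⟩
  haveI : Fact (1 < k) := ⟨by omega⟩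
  set t : ZMod m := ((k - 2 : ℕ) : ZMod m) with ht
  have hmpos : 0 < m := Nat.pos_of_ne_zero (NeZero.ne m)
  have key : ∃ i : ZMod m, A x (f i) ∧ A (f (i + t)) x := by
    by_contra hcon
    push_neg at hcon
    set a : Finset (ZMod m) := Finset.univ.filter (fun i => A x (f i)) with ha
    set b : Finset (ZMod m) := Finset.univ.filter (fun i => A (f (i + t)) x) with hb
    have h1 : ((Finset.univ.image f).filter fun y => A x y).card = a.card := by
      rw [Finset.filter_image, Finset.card_image_of_injective _ hfinj]
    have h2 : ((Finset.univ.image f).filter fun y => A y x).card = b.card := by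
      rw [Finset.filter_image, Finset.card_image_of_injective _ hfinj]
      apply Finset.card_bij' (fun i _ => i - t) (fun i _ => i + t)
      · intro i hi
        simp only [hb, Finset.mem_filter, Finset.mem_univ, true_and, sub_add_cancel]
        simpa using hi
      · intro i hi
        simp only [ha, hb, Finset.mem_filter, Finset.mem_univ, true_and] at hi ⊢
        exact hi
      · intro i _; ring
      · intro i _; ring
    have hdisj : Disjoint a b := by
      rw [Finset.disjoint_left]
      intro i hia hib
      simp only [ha, hb, Finset.mem_filter, Finset.mem_univ, true_and] at hia hib
      exact hcon i hia hib
    have hcu : a.card + b.card ≤ m := by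
      rw [← Finset.card_union_of_disjoint hdisj]
      calc (a ∪ b).card ≤ (Finset.univ : Finset (ZMod m)).card := Finset.card_le_card (Finset.subset_univ _)
        _ = m := by rw [Finset.card_univ, ZMod.card]
    rw [degOn, h1, h2] at hdeg
    omega
  obtain ⟨i, hxi, hix⟩ := key
  refine ⟨fun j => if j.val = 0 then x else f (i + ((j.val - 1 : ℕ) : ZMod m)), hk2, ?_, ?_⟩
  · intro j1 j2 hj
    have hv1 : j1.val < k := ZMod.val_lt j1
    have hv2 : j2.val < k := ZMod.val_lt j2
    by_cases h1 : j1.val = 0 <;> by_cases h2 : j2.val = 0 <;>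
      simp only [h1, h2, if_pos, if_neg, if_true, if_false] at hj
    · exact ZMod.val_injective k (h1.trans h2.symm)
    · exact absurd hj.symm (hx _)
    · exact absurd hj (hx _)
    · have := hfinj hj
      have := add_left_cancel this
      have e1 : ((j1.val - 1 : ℕ) : ZMod m).val = j1.val - 1 := ZMod.val_cast_of_lt (by omega)
      have e2 : ((j2.val - 1 : ℕ) : ZMod m).val = j2.val - 1 := ZMod.val_cast_of_lt (by omega)
      have : j1.val - 1 = j2.val - 1 := by rw [← e1, ← e2, this]
      have : j1.val = j2.val := by omega
      exact ZMod.val_injective k this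
  · intro j
    have hv : j.val < k := ZMod.val_lt j
    have hsucc : (j + 1).val = (j.val + 1) % k := by
      rw [ZMod.val_add, ZMod.val_one]
    by_cases hlast : j.val + 1 = k
    · -- j is the last vertex
      have hjv : (j + 1).val = 0 := by rw [hsucc, hlast, Nat.mod_self]
      have hj1 : j.val ≠ 0 := by omega
      simp only [hjv, hj1, if_pos, if_neg, if_true, if_false, ite_true, ite_false]
      have : j.val - 1 = k - 2 := by omega
      rw [this]
      exact hix
    · have hjv : (j + 1).val = j.val + 1 := by rw [hsucc, Nat.mod_eq_of_lt (by omega)]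
      by_cases h0 : j.val = 0
      · simp only [h0, hjv, if_pos, if_neg, ite_true, ite_false]
        norm_num
        exact hxi
      · simp only [hjv, h0, if_neg, Nat.succ_ne_zero, ite_false]
        have e : ((j.val + 1 - 1 : ℕ) : ZMod m) = ((j.val - 1 : ℕ) : ZMod m) + 1 := by
          have : j.val + 1 - 1 = (j.val - 1) + 1 := by omega
          rw [this]; push_cast; ring
        rw [e, ← add_assoc]
        exact harc _
end

section
/- Let D be a 2-strong digraph of order n ≥ 3 and let u, v be two distinct vertices of D. If D contains no directed cycle passing through both u and v, then u and v are non-adjacent, there is no directed path of length two between them (in either direction), and consequently d(u)+d(v) ≤ 2n−4. -/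
/-!
If `u → v`, a path from `v` to `u` in `D - w` for a third vertex `w` closes a cycle through both;
if `u → z → v`, a path from `v` to `u` in `D - z` closes one through `z`. So the out-neighbours
of `u` and the in-neighbours of `v` form disjoint subsets of `V \ {u, v}`, and likewise with `u`
and `v` exchanged, which gives `d(u) + d(v) ≤ 2 (n - 2)`.
-/

variable {V : Type} [Fintype V] [DecidableEq V]

theorem List.exists_nodup_isChain_cons_of_reflTransGen {α : Type*} {r : α → α → Prop} {a b : α}
    (h : Relation.ReflTransGen r a b) :
    ∃ l : List α, (a :: l).Nodup ∧ (a :: l).IsChain r ∧ (a :: l).getLast (cons_ne_nil a l) = b := by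
  induction h using Relation.ReflTransGen.head_induction_on with
  | refl => exact ⟨[], nodup_singleton b, isChain_singleton b, rfl⟩
  | @head a c hac _ ih =>
    obtain ⟨l, hnd, hch, hlast⟩ := ih
    by_cases ha : a ∈ c :: l
    · -- the path returns to `a`: cut off the loop
      obtain ⟨s, t, hst⟩ := append_of_mem ha
      have hsuf : a :: t <:+ c :: l := ⟨s, hst.symm⟩
      refine ⟨t, hnd.sublist hsuf.sublist, hch.suffix hsuf, ?_⟩
      rw [← hlast]
      simp only [hst, getLast_append_of_ne_nil _ (cons_ne_nil a t)]
    · exact ⟨c :: l, nodup_cons.mpr ⟨ha, hnd⟩, isChain_cons_cons.mpr ⟨hac, hch⟩,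
        by rw [getLast_cons (cons_ne_nil c l), hlast]⟩

section Cycles

variable {V : Type} {A : V → V → Prop}

def CycleThrough (A : V → V → Prop) (u v : V) : Prop :=
  ∃ (m : ℕ) (f : ZMod m → V), IsCycle A m f ∧ (∃ i, f i = u) ∧ (∃ j, f j = v)

theorem CycleThrough.symm {u v : V} : CycleThrough A u v → CycleThrough A v u
  | ⟨m, f, hf, hu, hv⟩ => ⟨m, f, hf, hv, hu⟩

theorem exists_isCycle_of_isChain {l : List V} (hlen : 2 ≤ l.length) (hnd : l.Nodup)
    (hch : l.IsChain A) (hclose : A l[l.length - 1] l[0]) :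
    ∃ m f, IsCycle A m f ∧ ∀ x ∈ l, ∃ i, f i = x := by
  set m := l.length
  have : Fact (1 < m) := ⟨hlen⟩
  refine ⟨m, fun i => l[i.val]'(ZMod.val_lt i), ⟨hlen, ?_, fun i => ?_⟩, fun x hx => ?_⟩
  · intro i j hij
    exact ZMod.val_injective m (hnd.getElem_inj_iff.mp hij)
  · have hsucc : (i + 1).val = (i.val + 1) % m := by rw [ZMod.val_add, ZMod.val_one]
    have hi := ZMod.val_lt i
    by_cases hlt : i.val + 1 < m
    · simp only [hsucc, Nat.mod_eq_of_lt hlt]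
      exact List.isChain_iff_getElem.mp hch i.val hlt
    · have hlast : i.val = m - 1 := by omega
      simp only [hsucc, hlast, Nat.sub_add_cancel (by omega : 1 ≤ m), Nat.mod_self]
      exact hclose
  · obtain ⟨n, hn, rfl⟩ := List.getElem_of_mem hx
    exact ⟨n, by simp only [ZMod.val_cast_of_lt hn]⟩

theorem cycleThrough_of_reflTransGen {a b : V} (hab : a ≠ b) (h : Relation.ReflTransGen A a b)
    (hba : A b a) : CycleThrough A a b := by
  obtain ⟨l, hnd, hch, hlast⟩ := List.exists_nodup_isChain_cons_of_reflTransGen h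
  have hl : l ≠ [] := by
    rintro rfl
    exact hab hlast
  obtain ⟨m, f, hf, hcov⟩ := exists_isCycle_of_isChain
    (by simpa [Nat.one_le_iff_ne_zero] using hl) hnd hch
    (by rw [← List.getLast_eq_getElem (List.cons_ne_nil a l), hlast]; exact hba)
  exact ⟨m, f, hf, hcov a List.mem_cons_self, hcov b (hlast ▸ List.getLast_mem _)⟩

theorem StrongOn.cycleThrough_of_arcs {z a b : V} (h : StrongOn A {x | x ≠ z}) (ha : a ≠ z)
    (hb : b ≠ z) (hza : A z a) (hbz : A b z) : CycleThrough A a b := by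
  obtain ⟨l, hnd, hch, hlast⟩ := List.exists_nodup_isChain_cons_of_reflTransGen (h a ha b hb)
  have hz : z ∉ a :: l := fun hz =>
    hch.induction (· ≠ z) _ (fun _ _ hxy _ => hxy.2.1) (fun _ => ha) z hz rfl
  obtain ⟨m, f, hf, hcov⟩ := exists_isCycle_of_isChain (l := z :: a :: l) (by simp)
    (List.nodup_cons.mpr ⟨hz, hnd⟩)
    (List.isChain_cons_cons.mpr ⟨hza, hch.imp fun _ _ hxy => hxy.2.2⟩)
    (by
      rw [← List.getLast_eq_getElem (List.cons_ne_nil z _),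
        List.getLast_cons (List.cons_ne_nil a l), hlast]
      exact hbz)
  exact ⟨m, f, hf, hcov a (by simp),
    hcov b (List.mem_cons_of_mem z (hlast ▸ List.getLast_mem _))⟩

theorem TwoStrong.not_dAdj_of_not_cycleThrough [Fintype V] (h : TwoStrong A) {u v : V}
    (huv : u ≠ v) (hnc : ¬ CycleThrough A u v) : ¬ DAdj A u v := by
  obtain ⟨w, hwu, hwv⟩ := Cardinal.exists_ne_ne_of_three_le
    (by rw [Cardinal.mk_fintype]; exact_mod_cast h.1) u v
  have hpath : ∀ x y, x ≠ w → y ≠ w → Relation.ReflTransGen A x y := fun x y hx hy =>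
    Relation.ReflTransGen.mono (fun _ _ hxy => hxy.2.2) _ _ (h.2 w x hx y hy)
  rintro (hA | hA)
  · exact hnc (cycleThrough_of_reflTransGen huv.symm (hpath v u hwv.symm hwu.symm) hA).symm
  · exact hnc (cycleThrough_of_reflTransGen huv (hpath u v hwu.symm hwv.symm) hA)

end Cycles

open Finset

theorem outDeg_add_inDeg_le (A : V → V → Prop) [DecidableRel A] (hloop : ∀ x, ¬ A x x) {x y : V}
    (hxy : x ≠ y) (hA : ¬ A x y) (hno : ∀ z, ¬ (A x z ∧ A z y)) :
    outDeg A x + inDeg A y ≤ Fintype.card V - 2 := by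
  have hdisj : Disjoint (univ.filter fun z => A x z) (univ.filter fun z => A z y) :=
    disjoint_filter.mpr fun z _ hxz hzy => hno z ⟨hxz, hzy⟩
  have hsub : (univ.filter fun z => A x z) ∪ (univ.filter fun z => A z y) ⊆ {x, y}ᶜ := by
    intro z hz
    simp only [mem_union, mem_filter_univ] at hz
    simp only [mem_compl, mem_insert, mem_singleton, not_or]
    constructor <;> rintro rfl <;> tauto
  calc outDeg A x + inDeg A y = #((univ.filter fun z => A x z) ∪ (univ.filter fun z => A z y)) :=
        (card_union_of_disjoint hdisj).symm
    _ ≤ #({x, y}ᶜ : Finset V) := card_le_card hsub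
    _ = Fintype.card V - 2 := by rw [card_compl, card_pair hxy]

theorem deg_add_deg_le (A : V → V → Prop) [DecidableRel A] (hloop : ∀ x, ¬ A x x) {u v : V}
    (huv : u ≠ v) (hadj : ¬ DAdj A u v) (hno : ¬ ∃ z, (A u z ∧ A z v) ∨ (A v z ∧ A z u)) :
    deg A u + deg A v ≤ 2 * Fintype.card V - 4 := by
  have huv' := outDeg_add_inDeg_le A hloop huv (fun h => hadj (Or.inl h))
    fun z hz => hno ⟨z, Or.inl hz⟩
  have hvu' := outDeg_add_inDeg_le A hloop huv.symm (fun h => hadj (Or.inr h))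
    fun z hz => hno ⟨z, Or.inr hz⟩
  unfold deg
  omega

theorem statement_3_general (A : V → V → Prop) [DecidableRel A]
    (hloop : ∀ v : V, ¬ A v v)
    (h2 : TwoStrong A)
    (u v : V) (huv : u ≠ v)
    (hnc : ¬ ∃ (m : ℕ) (f : ZMod m → V), IsCycle A m f ∧
      (∃ i, f i = u) ∧ (∃ j, f j = v)) :
    ¬ DAdj A u v ∧
    (¬ ∃ z : V, (A u z ∧ A z v) ∨ (A v z ∧ A z u)) ∧
    deg A u + deg A v ≤ 2 * Fintype.card V - 4 := by
  have hadj : ¬ DAdj A u v := h2.not_dAdj_of_not_cycleThrough huv hnc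
  have hno : ¬ ∃ z, (A u z ∧ A z v) ∨ (A v z ∧ A z u) := by
    have hne : ∀ {x y}, A x y → x ≠ y := fun hxy h => hloop _ (h ▸ hxy)
    rintro ⟨z, ⟨huz, hzv⟩ | ⟨hvz, hzu⟩⟩
    · exact hnc ((h2.2 z).cycleThrough_of_arcs (hne hzv).symm (hne huz) hzv huz).symm
    · exact hnc ((h2.2 z).cycleThrough_of_arcs (hne hzu).symm (hne hvz) hzu hvz)
  exact ⟨hadj, hno, deg_add_deg_le A hloop huv hadj hno⟩

/-- Lemma 3.5: in a 2-strong digraph of order n ≥ 3, if no cycle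
passes through both u and v, then u, v are non-adjacent, there is no path of
length two between them in either direction, and d(u)+d(v) ≤ 2n-4. -/
theorem statement_3 (A : V → V → Prop) [DecidableRel A]
    (hloop : ∀ v : V, ¬ A v v)
    (hn : 3 ≤ Fintype.card V)
    (h2 : TwoStrong A)
    (u v : V) (huv : u ≠ v)
    (hnc : ¬ ∃ (m : ℕ) (f : ZMod m → V), IsCycle A m f ∧
      (∃ i, f i = u) ∧ (∃ j, f j = v)) :
    ¬ DAdj A u v ∧
    (¬ ∃ z : V, (A u z ∧ A z v) ∨ (A v z ∧ A z u)) ∧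
    deg A u + deg A v ≤ 2 * Fintype.card V - 4 :=
  statement_3_general A hloop h2 u v huv hnc
end

section
/- Let D be a 2-strong digraph of order n ≥ 3 containing at most one pair of non-adjacent vertices. Then D is Hamiltonian. -/
variable {V : Type} [Fintype V] [DecidableEq V]

/-!
A strong semicomplete digraph is Hamiltonian (Camion): in a longest cycle `C`, a vertex off `C`
with an in-neighbour on `C` is dominated by all of `C` (otherwise it could be inserted), and
strong connectivity then produces an arc from such a vertex either into `C` or to a vertex
dominating `C`; either way `C` gets longer.

Otherwise let `{a, b}` be the non-adjacent pair. `D - a` is strong and semicomplete, so it has a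
Hamiltonian cycle `b → w₀ → ⋯ → w_{m-1} → b`. If `a` cannot be inserted into it, then `a → wₖ`
for `k < s` and `wₖ → a` for `k ≥ s`, and there are no other arcs except possibly `a → wₛ`.
Since `D - w₀` is strong, `0 < s`, so `a → w₀ → ⋯ → w_{m-1} → a` is a cycle, and in turn `b` has
the same shape with respect to it, with threshold `t`.
Say `s ≤ t`. As `D - wₛ` is strong, some arc `wᵢ → wⱼ` jumps over `wₛ`, and
`a → w₀ ⋯ wᵢ → wⱼ ⋯ w_{m-1} → b → w_{i+1} ⋯ w_{j-1} → a` is Hamiltonian unless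
`i = s - 1 = t - 1`. In that case strong connectivity of `D - w_{s-1}` gives an arc into `wₛ`
from `a`, from `b` or from some `wₖ` with `k < s - 1`, and each of them closes a Hamiltonian
cycle as well.
-/

open List Relation

theorem List.count_Ico (n i j : ℕ) : (Ico i j).count n = if i ≤ n ∧ n < j then 1 else 0 := by
  split_ifs with h
  · exact count_eq_one_of_mem (Ico.nodup i j) (Ico.mem.2 h)
  · exact count_eq_zero.2 fun h' => h (Ico.mem.1 h')

section Chains
variable {α : Type*} {R : α → α → Prop}

theorem List.IsChain.rel_getD {l : List α} {d : α} (h : IsChain R (l ++ [d])) {k : ℕ}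
    (hk : k < l.length) : R (l.getD k d) (l.getD (k + 1) d) := by
  have := isChain_iff_getElem.1 h k (by simp; omega)
  simp only [getElem_append, hk, dite_true, getD_eq_getElem?_getD, getElem?_eq_getElem hk,
    Option.getD_some] at this ⊢
  split_ifs at this with h'
  · simpa [getElem?_eq_getElem h'] using this
  · simpa [getElem?_eq_none (by omega : l.length ≤ k + 1)] using this

theorem List.exists_isRotated_cons {c : List α} {y : α} (hy : y ∈ c) :
    ∃ t, (y :: t) ~r c := by
  obtain ⟨s, t, rfl⟩ := append_of_mem hy
  exact ⟨t ++ s, by simpa using (isRotated_append (l := s) (l' := y :: t)).symm⟩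

theorem Cycle.Chain.isChain {l : List α} (h : Cycle.Chain R (l : Cycle α)) : IsChain R l := by
  cases l with
  | nil => exact .nil
  | cons x t => exact ((Cycle.chain_coe_cons R x t).1 h).left_of_append (l₂ := [x])

theorem Cycle.chain_cons_of_isChain {x : α} {l : List α} (h : IsChain R (x :: l))
    (hlast : R ((x :: l).getLast (cons_ne_nil x l)) x) : Cycle.Chain R (x :: l : List α) :=
  (Cycle.chain_ne_nil R (cons_ne_nil x l)).2 (h.cons (by simpa using hlast))

theorem Cycle.chain_insert {l₁ l₂ : List α} {p q v : α}
    (h : Cycle.Chain R (l₁ ++ p :: q :: l₂ : List α)) (hpv : R p v) (hvq : R v q) :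
    Cycle.Chain R (l₁ ++ p :: v :: q :: l₂ : List α) := by
  rw [Cycle.coe_eq_coe.2 isRotated_append] at h ⊢
  simp_all [isChain_cons_cons]

theorem Relation.ReflTransGen.exists_rel_mem_not_mem {S : Set α} {x y : α}
    (h : ReflTransGen R x y) (hx : x ∈ S) (hy : y ∉ S) : ∃ u ∈ S, ∃ v ∉ S, R u v := by
  induction h with
  | refl => exact absurd hx hy
  | @tail b c _ hbc ih =>
    by_cases hb : b ∈ S
    · exact ⟨b, hb, c, hy, hbc⟩
    · exact ih hb

theorem exists_cycle_of_rel_of_reflTransGen {x y : α} (hyx : R y x) (h : ReflTransGen R x y) :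
    ∃ l, (x :: l).Nodup ∧ Cycle.Chain R (x :: l : List α) := by
  suffices ∀ z, ReflTransGen R z y → ∃ l, (z :: l).Nodup ∧ IsChain R (z :: l ++ [x]) from
    this x h
  intro z hz
  induction hz using ReflTransGen.head_induction_on with
  | refl => exact ⟨[], by simpa using hyx⟩
  | @head z z' hzz' _ ih =>
    obtain ⟨l, hnd, hc⟩ := ih
    by_cases hz : z ∈ z' :: l
    · obtain ⟨s, t, hst⟩ := append_of_mem hz
      rw [hst] at hnd
      rw [hst, append_assoc, cons_append] at hc
      exact ⟨t, hnd.sublist (sublist_append_right _ _), hc.right_of_append⟩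
    · exact ⟨z' :: l, nodup_cons.2 ⟨hz, hnd⟩, hc.cons_cons hzz'⟩

theorem forall_rel_of_longest_cycle (hsc : ∀ x y, x ≠ y → R x y ∨ R y x) {c : List α}
    (hnd : c.Nodup) (hc : Cycle.Chain R (c : Cycle α))
    (hmax : ∀ c' : List α, c'.Nodup → Cycle.Chain R (c' : Cycle α) → c'.length ≤ c.length)
    {v y : α} (hv : v ∉ c) (hy : y ∈ c) (hyv : R y v) : ∀ z ∈ c, R z v := by
  obtain ⟨t, hrot⟩ := exists_isRotated_cons hy
  have hc' : Cycle.Chain R (y :: t : List α) := (Cycle.coe_eq_coe.2 hrot) ▸ hc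
  -- otherwise `v` could be inserted between two consecutive vertices of `c`
  have hstep : IsChain (fun p q => R p v → R q v) (y :: t) := by
    refine isChain_iff_forall_rel_of_append_cons_cons.2 fun p q l₁ l₂ heq hpv => ?_
    have hqc : q ∈ c := hrot.mem_iff.1 (by simp [heq])
    refine (hsc q v (by rintro rfl; exact hv hqc)).resolve_right fun hvq => ?_
    rw [heq] at hc' hrot
    have hperm : (l₁ ++ p :: v :: q :: l₂).Perm (v :: c) := by
      have := perm_middle (l₁ := l₁ ++ [p]) (a := v) (l₂ := q :: l₂)
      simp only [append_assoc, cons_append, nil_append] at this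
      exact this.trans (.cons v hrot.perm)
    have := hmax _ (hperm.nodup_iff.2 (nodup_cons.2 ⟨hv, hnd⟩)) (Cycle.chain_insert hc' hpv hvq)
    simp [hperm.length_eq] at this
  exact fun z hz => hstep.induction _ _ (fun _ _ h => h) (fun _ => hyv) z (hrot.mem_iff.2 hz)

theorem exists_longer_cycle (hsc : ∀ x y, x ≠ y → R x y ∨ R y x)
    (hs : ∀ x y, ReflTransGen R x y) {c : List α} (hnd : c.Nodup)
    (hc : Cycle.Chain R (c : Cycle α)) {x₀ v₀ : α} (hx₀ : x₀ ∈ c) (hv₀ : v₀ ∉ c) :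
    ∃ c' : List α, c'.Nodup ∧ Cycle.Chain R (c' : Cycle α) ∧ c.length < c'.length := by
  by_contra! hmax
  have hdom : ∀ {v y}, v ∉ c → y ∈ c → R y v → ∀ z ∈ c, R z v :=
    forall_rel_of_longest_cycle hsc hnd hc hmax
  obtain ⟨y, hy, u, hu, hyu⟩ := (hs x₀ v₀).exists_rel_mem_not_mem (S := {z | z ∈ c}) hx₀ hv₀
  -- an arc leaving the set of vertices dominated by `c` lengthens `c` by one or two vertices
  obtain ⟨u₁, ⟨hu₁c, hu₁⟩, u₂, hu₂, h₁₂⟩ := (hs u x₀).exists_rel_mem_not_mem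
    (S := {z | z ∉ c ∧ ∀ y ∈ c, R y z}) ⟨hu, hdom hu hy hyu⟩ (fun h => h.1 hx₀)
  by_cases hu₂c : u₂ ∈ c
  · obtain ⟨t, hrot⟩ := exists_isRotated_cons hu₂c
    have hc' : Cycle.Chain R (u₂ :: t : List α) := (Cycle.coe_eq_coe.2 hrot) ▸ hc
    have := hmax (u₁ :: u₂ :: t)
      (nodup_cons.2 ⟨fun h => hu₁c (hrot.mem_iff.1 h), hrot.nodup_iff.2 hnd⟩)
      (Cycle.chain_cons_of_isChain (hc'.isChain.cons_cons h₁₂)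
        (hu₁ _ (hrot.mem_iff.1 (by simp))))
    simp [hrot.perm.length_eq] at this
  · have hout : ∀ y ∈ c, R u₂ y := fun y hy =>
      (hsc u₂ y (by rintro rfl; exact hu₂c hy)).resolve_right
        fun h => hu₂ ⟨hu₂c, hdom hu₂c hy h⟩
    obtain ⟨t, hrot⟩ := exists_isRotated_cons hx₀
    have hc' : Cycle.Chain R (x₀ :: t : List α) := (Cycle.coe_eq_coe.2 hrot) ▸ hc
    have hnd' : (u₁ :: u₂ :: x₀ :: t).Nodup := by
      rw [nodup_cons, nodup_cons, mem_cons, hrot.mem_iff, hrot.mem_iff, hrot.nodup_iff]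
      exact ⟨not_or.2 ⟨fun h => hu₂ (h ▸ ⟨hu₁c, hu₁⟩), hu₁c⟩, hu₂c, hnd⟩
    have := hmax _ hnd'
      (Cycle.chain_cons_of_isChain ((hc'.isChain.cons_cons (hout x₀ hx₀)).cons_cons h₁₂)
        (hu₁ _ (hrot.mem_iff.1 (by simp))))
    simp [hrot.perm.length_eq] at this

theorem exists_spanning_cycle_of_semicomplete [Fintype α] [Nontrivial α]
    (hsc : ∀ x y, x ≠ y → R x y ∨ R y x) (hs : ∀ x y, ReflTransGen R x y) :
    ∃ c : List α, c.Nodup ∧ (∀ x, x ∈ c) ∧ Cycle.Chain R (c : Cycle α) := by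
  classical
  obtain ⟨c₀, hne₀, hnd₀, hc₀⟩ :
      ∃ c : List α, c ≠ [] ∧ c.Nodup ∧ Cycle.Chain R (c : Cycle α) := by
    obtain ⟨x, y, hxy⟩ := exists_pair_ne α
    rcases hsc x y hxy with h | h
    · obtain ⟨l, hnd, hc⟩ := exists_cycle_of_rel_of_reflTransGen h (hs y x)
      exact ⟨_, cons_ne_nil _ _, hnd, hc⟩
    · obtain ⟨l, hnd, hc⟩ := exists_cycle_of_rel_of_reflTransGen h (hs x y)
      exact ⟨_, cons_ne_nil _ _, hnd, hc⟩
  let P k := ∃ c : List α, c ≠ [] ∧ c.Nodup ∧ Cycle.Chain R (c : Cycle α) ∧ c.length = k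
  obtain ⟨c, hne, hnd, hc, hlen⟩ : P (Nat.findGreatest P (Fintype.card α)) :=
    Nat.findGreatest_spec hnd₀.length_le_card ⟨c₀, hne₀, hnd₀, hc₀, rfl⟩
  refine ⟨c, hnd, fun v => by_contra fun hv => ?_, hc⟩
  obtain ⟨c', hnd', hc', hlt⟩ := exists_longer_cycle hsc hs hnd hc (head_mem hne) hv
  have : c'.length ≤ Nat.findGreatest P (Fintype.card α) := Nat.le_findGreatest
    hnd'.length_le_card ⟨c', ne_nil_of_length_pos (by omega), hnd', hc', rfl⟩
  omega

end Chains

section Digraph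
variable {α : Type} {A : α → α → Prop}

theorem exists_ne_ne_of_two_lt_card [Fintype α] (h : 2 < Fintype.card α) (x y : α) :
    ∃ z, z ≠ x ∧ z ≠ y := by
  classical
  obtain ⟨z, -, hz⟩ := Finset.exists_mem_notMem_of_card_lt_card
    (s := {x, y}) (t := Finset.univ) (Finset.card_le_two.trans_lt h)
  simp only [Finset.mem_insert, Finset.mem_singleton, not_or] at hz
  exact ⟨z, hz⟩

theorem hamiltonian_of_cycle [Fintype α] {c : List α} (hnd : c.Nodup) (hmem : ∀ x, x ∈ c)
    (hc : Cycle.Chain A (c : Cycle α)) (h2 : 2 ≤ Fintype.card α) : Hamiltonian A := by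
  classical
  have hlen : c.length = Fintype.card α := by
    rw [← toFinset_card_of_nodup hnd,
      Finset.eq_univ_iff_forall.2 fun y => mem_toFinset.2 (hmem y), Finset.card_univ]
  obtain ⟨x, t, rfl⟩ := exists_cons_of_ne_nil (ne_nil_of_length_pos (l := c) (by omega))
  have : NeZero (Fintype.card α) := ⟨by omega⟩
  have hval : ∀ i : ZMod (Fintype.card α), i.val < (x :: t).length := fun i => by
    rw [hlen]; exact ZMod.val_lt i
  refine ⟨fun i => (x :: t)[i.val]'(hval i), h2, fun i j hij => ZMod.val_injective _ ?_,
    fun i => ?_⟩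
  · exact (hnd.getElem_inj_iff).1 hij
  · have hc' : IsChain A ((x :: t) ++ [x]) := (Cycle.chain_coe_cons A x t).1 hc
    have hi := hval i
    have hch := isChain_iff_getElem.1 hc' i.val (by simpa using hi)
    rw [getElem_append_left hi] at hch
    have h1 : (i + 1).val = (i.val + 1) % Fintype.card α := by
      rw [ZMod.val_add, ZMod.val_one'' (by omega)]
    rcases Nat.lt_or_ge (i.val + 1) (Fintype.card α) with h | h
    · simp only [h1, Nat.mod_eq_of_lt h]
      rwa [getElem_append_left] at hch
    · have h' : i.val + 1 = Fintype.card α := by omega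
      simp only [h1, h', Nat.mod_self]
      rwa [getElem_concat_length (by omega)] at hch

theorem StrongOn.exists_rel_mem_not_mem {S T : Set α} (hS : StrongOn A S) {x y : α}
    (hx : x ∈ S) (hy : y ∈ S) (hxT : x ∈ T) (hyT : y ∉ T) :
    ∃ u ∈ S, ∃ v ∈ S, u ∈ T ∧ v ∉ T ∧ A u v := by
  obtain ⟨u, hu, v, hv, hSu, hSv, huv⟩ := (hS x hx y hy).exists_rel_mem_not_mem hxT hyT
  exact ⟨u, hSu, v, hSv, hu, hv, huv⟩

theorem StrongOn.reflTransGen_subtype {S : Set α} (hS : StrongOn A S) (x y : S) :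
    ReflTransGen (fun p q : S => A p q) x y := by
  obtain ⟨x, hx⟩ := x
  obtain ⟨y, hy⟩ := y
  induction hS x hx y hy with
  | refl => exact .refl
  | tail _ hyz ih => exact .tail (ih hyz.1) hyz.2.2

theorem TwoStrong.reflTransGen [Fintype α] (h : TwoStrong A) (x y : α) : ReflTransGen A x y := by
  obtain ⟨c, hcx, hcy⟩ := exists_ne_ne_of_two_lt_card h.1 x y
  exact (h.2 c x hcx.symm y hcy.symm).lift id fun _ _ huv => huv.2.2

structure IsHamPathOff (A : α → α → Prop) (a b : α) (w : ℕ → α) (m : ℕ) : Prop where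
  rel : ∀ k, k + 1 < m → A (w k) (w (k + 1))
  injOn : Set.InjOn w (Set.Iio m)
  ne_left : ∀ k < m, w k ≠ a
  ne_right : ∀ k < m, w k ≠ b
  exists_eq : ∀ x, x ≠ a → x ≠ b → ∃ k < m, w k = x

structure SwitchesAt (A : α → α → Prop) (w : ℕ → α) (m : ℕ) (x : α) (s : ℕ) :
    Prop where
  out_of_lt : ∀ k < s, A x (w k)
  not_in_of_lt : ∀ k < s, ¬ A (w k) x
  in_of_le : ∀ k, s ≤ k → k < m → A (w k) x
  not_out_of_lt : ∀ k, s < k → k < m → ¬ A x (w k)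

theorem exists_switchesAt {w : ℕ → α} {m : ℕ} {x : α}
    (hadj : ∀ k < m, DAdj A x (w k))
    (hins : ∀ k, k + 1 < m → A (w k) x → ¬ A x (w (k + 1)))
    {k₀ : ℕ} (hk₀ : k₀ < m) (h₀ : A (w k₀) x) :
    ∃ s ≤ k₀, SwitchesAt A w m x s := by
  classical
  have hex : ∃ k, A (w k) x := ⟨k₀, h₀⟩
  have hle : Nat.find hex ≤ k₀ := Nat.find_min' hex h₀
  have hin : ∀ k, Nat.find hex ≤ k → k < m → A (w k) x := by
    intro k hk
    induction k, hk using Nat.le_induction with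
    | base => exact fun _ => Nat.find_spec hex
    | succ k _ ih =>
      intro hk
      exact (hadj (k + 1) hk).resolve_left (hins k hk (ih (by omega)))
  refine ⟨Nat.find hex, hle, fun k hk => ?_, fun k hk => Nat.find_min hex hk, hin,
    fun k hk hkm hxk => ?_⟩
  · exact (hadj k (by omega)).resolve_right (Nat.find_min hex hk)
  · obtain ⟨k, rfl⟩ : ∃ k', k = k' + 1 := ⟨k - 1, by omega⟩
    exact hins k hkm (hin k (by omega) (by omega)) hxk

namespace IsHamPathOff
variable {a b : α} {w : ℕ → α} {m : ℕ}

theorem symm (hp : IsHamPathOff A a b w m) : IsHamPathOff A b a w m :=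
  ⟨hp.rel, hp.injOn, hp.ne_right, hp.ne_left, fun x hb ha => hp.exists_eq x ha hb⟩

theorem nodup (hp : IsHamPathOff A a b w m) (hab : a ≠ b) :
    (a :: b :: (range m).map w).Nodup := by
  have hw : ∀ x ∈ (range m).map w, x ≠ a ∧ x ≠ b := by
    simp only [mem_map, mem_range]
    rintro _ ⟨k, hk, rfl⟩
    exact ⟨hp.ne_left k hk, hp.ne_right k hk⟩
  refine nodup_cons.2 ⟨?_, nodup_cons.2 ⟨fun h => (hw b h).2 rfl, ?_⟩⟩
  · rintro (_ | ⟨_, h⟩)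
    exacts [hab rfl, (hw a h).1 rfl]
  · exact (nodup_range).map_on fun i hi j hj h =>
      hp.injOn (mem_range.1 hi : i < m) (mem_range.1 hj : j < m) h

theorem mem (hp : IsHamPathOff A a b w m) (x : α) : x ∈ a :: b :: (range m).map w := by
  by_cases ha : x = a
  · simp [ha]
  by_cases hb : x = b
  · simp [hb]
  obtain ⟨k, hk, rfl⟩ := hp.exists_eq x ha hb
  exact mem_cons_of_mem _ (mem_cons_of_mem _ (mem_map_of_mem (mem_range.2 hk)))

theorem hamiltonian_of_split [Fintype α] (hp : IsHamPathOff A a b w m) (hab : a ≠ b)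
    {I J : List ℕ} (hIJ : (I ++ J).Perm (range m))
    (hc : IsChain A (a :: (I.map w ++ b :: (J.map w ++ [a])))) :
    Hamiltonian A := by
  have hperm : (a :: (I.map w ++ b :: J.map w)).Perm (a :: b :: (range m).map w) :=
    .cons a (perm_middle.trans (.cons b (by rw [← map_append]; exact hIJ.map w)))
  refine hamiltonian_of_cycle (hperm.nodup_iff.2 (hp.nodup hab))
    (fun x => hperm.mem_iff.2 (hp.mem x)) ?_ (Fintype.one_lt_card_iff.2 ⟨a, b, hab⟩)
  simpa using hc

theorem isChain_cons_map_Ico_append (hp : IsHamPathOff A a b w m) {x : α} {l : List α}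
    {i j : ℕ} (hij : i < j) (hjm : j ≤ m) (hx : A x (w i)) (hl : IsChain A (w (j - 1) :: l)) :
    IsChain A (x :: ((Ico i j).map w ++ l)) := by
  induction h : j - i generalizing i x with
  | zero => omega
  | succ d ih =>
    rw [Ico.eq_cons hij, map_cons, cons_append]
    refine isChain_cons_cons.2 ⟨hx, ?_⟩
    rcases Nat.lt_or_ge (i + 1) j with h' | h'
    · exact ih h' (hp.rel i (by omega)) (by omega)
    · rw [Ico.eq_nil_of_le h', show i = j - 1 by omega]
      exact hl

theorem hamiltonian_of_insert [Fintype α] (hp : IsHamPathOff A a b w m) (hab : a ≠ b)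
    (ha : A a (w 0)) (hma : A (w (m - 1)) a) {k : ℕ} (hk : k + 1 < m)
    (hkb : A (w k) b) (hbk : A b (w (k + 1))) : Hamiltonian A := by
  refine hp.hamiltonian_of_split hab (I := Ico 0 (k + 1)) (J := Ico (k + 1) m)
    (perm_iff_count.2 fun n => ?_) ?_
  · simp only [count_append, count_Ico, ← Ico.zero_bot]; split_ifs <;> omega
  · exact hp.isChain_cons_map_Ico_append (by omega) (by omega) ha <| isChain_cons_cons.2
      ⟨hkb, hp.isChain_cons_map_Ico_append (by omega) le_rfl hbk (isChain_pair.2 hma)⟩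

theorem exists_pos_rel (hp : IsHamPathOff A a b w m) (hS : StrongOn A {v | v ≠ w 0})
    (hm : 0 < m) (hab : a ≠ b) (hnab : ¬ A a b) : ∃ k, 0 < k ∧ k < m ∧ A a (w k) := by
  obtain ⟨u, -, v, hv0, rfl, hva, huv⟩ := hS.exists_rel_mem_not_mem (T := {a})
    (hp.ne_left 0 hm).symm (hp.ne_right 0 hm).symm rfl hab.symm
  obtain ⟨k, hk, rfl⟩ := hp.exists_eq v hva (by rintro rfl; exact hnab huv)
  exact ⟨k, Nat.pos_of_ne_zero (by rintro rfl; exact hv0 rfl), hk, huv⟩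

theorem exists_rel_lt (hp : IsHamPathOff A a b w m) (hS : StrongOn A {v | v ≠ w (m - 1)})
    (hm : 0 < m) (hab : a ≠ b) (hnba : ¬ A b a) : ∃ k, k + 1 < m ∧ A (w k) a := by
  obtain ⟨u, hu, v, -, hua, hva, huv⟩ := hS.exists_rel_mem_not_mem (T := {v | v ≠ a})
    (hp.ne_right _ (by omega)).symm (hp.ne_left _ (by omega)).symm hab.symm (not_not.2 rfl)
  obtain rfl : v = a := by simpa using hva
  obtain ⟨k, hk, rfl⟩ := hp.exists_eq u hua (by rintro rfl; exact hnba huv)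
  exact ⟨k, by have : k ≠ m - 1 := fun h => hu (h ▸ rfl); omega, huv⟩

theorem hamiltonian_of_jump [Fintype α] (hp : IsHamPathOff A a b w m) (hab : a ≠ b)
    {s t : ℕ} (ha : SwitchesAt A w m a s) (hb : SwitchesAt A w m b t) (hs : 0 < s) (ht : t < m)
    {i j : ℕ} (hi : i < s) (hit : i + 1 < t) (hsj : s < j) (hjm : j < m)
    (hij : A (w i) (w j)) : Hamiltonian A := by
  refine hp.hamiltonian_of_split hab (I := Ico 0 (i + 1) ++ Ico j m) (J := Ico (i + 1) j)
    (perm_iff_count.2 fun n => ?_) ?_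
  · simp only [count_append, count_Ico, ← Ico.zero_bot]; split_ifs <;> omega
  simp only [map_append, append_assoc]
  refine hp.isChain_cons_map_Ico_append (by omega) (by omega) (ha.out_of_lt 0 hs) ?_
  refine hp.isChain_cons_map_Ico_append hjm le_rfl hij (isChain_cons_cons.2 ⟨?_, ?_⟩)
  · exact hb.in_of_le _ (by omega) (by omega)
  refine hp.isChain_cons_map_Ico_append (by omega) hjm.le (hb.out_of_lt _ hit) ?_
  exact isChain_pair.2 (ha.in_of_le _ (by omega) (by omega))

theorem exists_jump {s t : ℕ} (hp : IsHamPathOff A a b w m) (hS : StrongOn A {v | v ≠ w s})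
    (hnab : ¬ A a b) (ha : SwitchesAt A w m a s) (hb : SwitchesAt A w m b t)
    (hst : s ≤ t) (ht : t + 1 < m) : ∃ i j, i < s ∧ s < j ∧ j < m ∧ A (w i) (w j) := by
  have hwinj : ∀ k l, k < m → l < m → w k = w l → k = l :=
    fun k l hk hl h => hp.injOn (Set.mem_Iio.2 hk) (Set.mem_Iio.2 hl) h
  obtain ⟨u, -, v, hvs, hu, hv, huv⟩ := hS.exists_rel_mem_not_mem
    (T := {z | z = a ∨ ∃ k < s, w k = z}) (hp.ne_left s (by omega)).symm
    (fun h => by have := hwinj _ _ (by omega) (by omega) h; omega) (Or.inl rfl)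
    (by
      rintro (h | ⟨k, hk, h⟩)
      · exact hp.ne_left _ (by omega) h
      · have := hwinj _ _ (by omega) (by omega) h; omega)
  simp only [Set.mem_ofPred_eq, not_or, not_exists, not_and] at hu hv hvs
  obtain ⟨j, hjm, rfl⟩ := hp.exists_eq v hv.1 (by
    rintro rfl
    rcases hu with rfl | ⟨k, hk, rfl⟩
    exacts [hnab huv, hb.not_in_of_lt k (by omega) huv])
  have hsj : s < j := by
    rcases lt_trichotomy j s with h | rfl | h
    exacts [absurd rfl (hv.2 j h), absurd rfl hvs, h]
  rcases hu with rfl | ⟨i, hi, rfl⟩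
  · exact absurd huv (ha.not_out_of_lt j hsj hjm)
  · exact ⟨i, j, hi, hsj, hjm, huv⟩

theorem exists_rel_switch {s : ℕ} (hp : IsHamPathOff A a b w m)
    (hS : StrongOn A {v | v ≠ w (s - 1)}) (ha : SwitchesAt A w m a s)
    (hb : SwitchesAt A w m b s) (hs : 0 < s) (hsm : s + 1 < m)
    (hjump : ∀ i j, i + 1 < s → s < j → j < m → ¬ A (w i) (w j)) :
    ∃ u, (u = a ∨ u = b ∨ ∃ k, k + 1 < s ∧ w k = u) ∧ A u (w s) := by
  have hwinj : ∀ k l, k < m → l < m → w k = w l → k = l :=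
    fun k l hk hl h => hp.injOn (Set.mem_Iio.2 hk) (Set.mem_Iio.2 hl) h
  obtain ⟨u, -, v, hvs, hu, hv, huv⟩ := hS.exists_rel_mem_not_mem
    (T := {z | z = a ∨ z = b ∨ ∃ k, k + 1 < s ∧ w k = z}) (hp.ne_left _ (by omega)).symm
    (fun h => by have := hwinj _ _ (by omega) (by omega) h; omega) (Or.inl rfl)
    (by
      rintro (h | h | ⟨k, hk, h⟩)
      · exact hp.ne_left _ (by omega) h
      · exact hp.ne_right _ (by omega) h
      · have := hwinj _ _ (by omega) (by omega) h; omega)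
  simp only [Set.mem_ofPred_eq, not_or, not_exists, not_and] at hu hv hvs
  obtain ⟨l, hlm, rfl⟩ := hp.exists_eq v hv.1 hv.2.1
  have hsl : s ≤ l := by
    rcases lt_trichotomy (l + 1) s with h | h | h
    · exact absurd rfl (hv.2.2 l h)
    · exact absurd (by rw [show l = s - 1 by omega]) hvs
    · omega
  refine ⟨u, hu, ?_⟩
  obtain rfl : l = s := by
    by_contra hne
    rcases hu with rfl | rfl | ⟨k, hk, rfl⟩
    · exact ha.not_out_of_lt l (by omega) hlm huv
    · exact hb.not_out_of_lt l (by omega) hlm huv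
    · exact hjump k l hk (by omega) hlm huv
  exact huv

theorem hamiltonian_of_rel_switch [Fintype α] {s j : ℕ} (hp : IsHamPathOff A a b w m)
    (hab : a ≠ b) (ha : SwitchesAt A w m a s) (hb : SwitchesAt A w m b s) (hs : 0 < s)
    (hsj : s < j) (hjm : j < m) (hj : A (w (s - 1)) (w j)) {u : α}
    (hu : u = a ∨ u = b ∨ ∃ k, k + 1 < s ∧ w k = u) (hus : A u (w s)) : Hamiltonian A := by
  rcases hu with rfl | rfl | ⟨k, hk, rfl⟩
  · refine hp.hamiltonian_of_split hab (I := Ico s j) (J := Ico 0 s ++ Ico j m)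
      (perm_iff_count.2 fun n => ?_) ?_
    · simp only [count_append, count_Ico, ← Ico.zero_bot]; split_ifs <;> omega
    simp only [map_append, append_assoc]
    refine hp.isChain_cons_map_Ico_append hsj hjm.le hus
      (isChain_cons_cons.2 ⟨hb.in_of_le _ (by omega) (by omega), ?_⟩)
    refine hp.isChain_cons_map_Ico_append hs (by omega) (hb.out_of_lt 0 hs) ?_
    exact hp.isChain_cons_map_Ico_append hjm le_rfl hj
      (isChain_pair.2 (ha.in_of_le _ (by omega) (by omega)))
  · refine hp.hamiltonian_of_split hab (I := Ico 0 s ++ Ico j m) (J := Ico s j)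
      (perm_iff_count.2 fun n => ?_) ?_
    · simp only [count_append, count_Ico, ← Ico.zero_bot]; split_ifs <;> omega
    simp only [map_append, append_assoc]
    refine hp.isChain_cons_map_Ico_append hs (by omega) (ha.out_of_lt 0 hs) ?_
    refine hp.isChain_cons_map_Ico_append hjm le_rfl hj
      (isChain_cons_cons.2 ⟨hb.in_of_le _ (by omega) (by omega), ?_⟩)
    exact hp.isChain_cons_map_Ico_append hsj hjm.le hus
      (isChain_pair.2 (ha.in_of_le _ (by omega) (by omega)))
  · refine hp.hamiltonian_of_split hab (I := Ico 0 (k + 1) ++ Ico s j)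
      (J := Ico (k + 1) s ++ Ico j m) (perm_iff_count.2 fun n => ?_) ?_
    · simp only [count_append, count_Ico, ← Ico.zero_bot]; split_ifs <;> omega
    simp only [map_append, append_assoc]
    refine hp.isChain_cons_map_Ico_append (by omega) (by omega) (ha.out_of_lt 0 hs) ?_
    refine hp.isChain_cons_map_Ico_append hsj hjm.le hus
      (isChain_cons_cons.2 ⟨hb.in_of_le _ (by omega) (by omega), ?_⟩)
    refine hp.isChain_cons_map_Ico_append hk (by omega) (hb.out_of_lt _ hk) ?_
    exact hp.isChain_cons_map_Ico_append hjm le_rfl hj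
      (isChain_pair.2 (ha.in_of_le _ (by omega) (by omega)))

theorem hamiltonian_of_switchesAt [Fintype α] {s t : ℕ} (hp : IsHamPathOff A a b w m)
    (hS : ∀ c, StrongOn A {v | v ≠ c}) (hab : a ≠ b) (hnab : ¬ A a b)
    (ha : SwitchesAt A w m a s) (hb : SwitchesAt A w m b t) (hs : 0 < s) (hst : s ≤ t)
    (ht : t + 1 < m) : Hamiltonian A := by
  by_contra hH
  have hjump : ∀ i j, i < s → i + 1 < t → s < j → j < m → ¬ A (w i) (w j) :=
    fun i j hi hit hsj hjm hij =>
      hH (hp.hamiltonian_of_jump hab ha hb hs (by omega) hi hit hsj hjm hij)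
  obtain ⟨i, j, hi, hsj, hjm, hij⟩ := hp.exists_jump (hS _) hnab ha hb hst ht
  obtain ⟨rfl, rfl⟩ : s = t ∧ i = s - 1 := by
    by_contra
    exact hjump i j hi (by omega) hsj hjm hij
  obtain ⟨u, hu, hus⟩ := hp.exists_rel_switch (hS _) ha hb hs ht
    fun i j hi hsj hjm => hjump i j (by omega) hi hsj hjm
  exact hH (hp.hamiltonian_of_rel_switch hab ha hb hs hsj hjm hij hu hus)

theorem hamiltonian_of_twoStrong [Fintype α] (hp : IsHamPathOff A a b w m)
    (hS : ∀ c, StrongOn A {v | v ≠ c}) (hab : a ≠ b) (hnab : ¬ A a b) (hnba : ¬ A b a)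
    (hadj : ∀ k < m, DAdj A a (w k) ∧ DAdj A b (w k)) (hm : 0 < m)
    (hb0 : A b (w 0)) (hbm : A (w (m - 1)) b) : Hamiltonian A := by
  by_contra hH
  obtain ⟨k, hk, hka⟩ := hp.exists_rel_lt (hS _) hm hab hnba
  obtain ⟨s, hsk, ha⟩ := exists_switchesAt (fun k hk => (hadj k hk).1)
    (fun k hk h₁ h₂ => hH (hp.symm.hamiltonian_of_insert hab.symm hb0 hbm hk h₁ h₂))
    (by omega) hka
  have hs : 0 < s := by
    obtain ⟨k, hk0, hkm, hak⟩ := hp.exists_pos_rel (hS _) hm hab hnab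
    by_contra
    exact ha.not_out_of_lt k (by omega) hkm hak
  obtain ⟨l, hl, hlb⟩ := hp.symm.exists_rel_lt (hS _) hm hab.symm hnab
  obtain ⟨t, htl, hb⟩ := exists_switchesAt (fun k hk => (hadj k hk).2)
    (fun k hk h₁ h₂ => hH (hp.hamiltonian_of_insert hab (ha.out_of_lt 0 hs)
      (ha.in_of_le _ (by omega) (by omega)) hk h₁ h₂))
    (by omega) hlb
  have ht : 0 < t := by
    obtain ⟨k, hk0, hkm, hbk⟩ := hp.symm.exists_pos_rel (hS _) hm hab.symm hnba
    by_contra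
    exact hb.not_out_of_lt k (by omega) hkm hbk
  rcases le_total s t with hst | hts
  · exact hH (hp.hamiltonian_of_switchesAt hS hab hnab ha hb hs hst (by omega))
  · exact hH (hp.symm.hamiltonian_of_switchesAt hS hab.symm hnba hb ha ht hts (by omega))

end IsHamPathOff

theorem isHamPathOff_of_cycle {a b : α} {t : List α} (hnd : (b :: t).Nodup)
    (hc : Cycle.Chain A (b :: t : List α)) (hmem : ∀ x, x ∈ b :: t ↔ x ≠ a) :
    IsHamPathOff A a b (fun k => t.getD k b) t.length ∧
      A b (t.getD 0 b) ∧ A (t.getD (t.length - 1) b) b := by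
  have hch := fun k (hk : k < t.length + 1) =>
    IsChain.rel_getD (l := b :: t) ((Cycle.chain_coe_cons A b t).1 hc) (k := k) hk
  have hlast : A (t.getD (t.length - 1) b) b := by
    rcases t.eq_nil_or_concat with rfl | ⟨t', y, rfl⟩
    · simpa using hch 0 (by simp)
    · simpa [getD_eq_getElem?_getD] using hch (t'.length + 1) (by simp)
  have hmem_t : ∀ x, x ∈ t ↔ x ≠ a ∧ x ≠ b := by
    intro x
    have hx := hmem x
    rw [mem_cons] at hx
    refine ⟨fun h => ⟨hx.1 (.inr h), ?_⟩, fun h => (hx.2 h.1).resolve_left h.2⟩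
    rintro rfl
    exact (nodup_cons.1 hnd).1 h
  have hget : ∀ k (hk : k < t.length), t.getD k b = t[k] := fun k hk => getD_eq_getElem _ _ hk
  refine ⟨⟨fun k hk => by simpa using hch (k + 1) (by omega), fun k hk l hl h => ?_,
    fun k hk h => ?_, fun k hk h => ?_, fun x hxa hxb => ?_⟩, by simpa using hch 0 (by omega),
    hlast⟩
  · rw [hget k hk, hget l hl] at h
    exact (nodup_cons.1 hnd).2.getElem_inj_iff.1 h
  · exact ((hmem_t _).1 (hget k hk ▸ getElem_mem hk)).1 h
  · exact ((hmem_t _).1 (hget k hk ▸ getElem_mem hk)).2 h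
  · obtain ⟨k, hk, rfl⟩ := getElem_of_mem ((hmem_t x).2 ⟨hxa, hxb⟩)
    exact ⟨k, hk, hget k hk⟩

theorem exists_isHamPathOff [Fintype α] {a b : α} (hab : a ≠ b)
    (hS : StrongOn A {v | v ≠ a}) (hsc : ∀ x y, x ≠ a → y ≠ a → x ≠ y → DAdj A x y)
    (hcard : 2 < Fintype.card α) :
    ∃ w m, IsHamPathOff A a b w m ∧ A b (w 0) ∧ A (w (m - 1)) b := by
  classical
  obtain ⟨z, hza, hzb⟩ := exists_ne_ne_of_two_lt_card hcard a b
  have : Nontrivial {v // v ≠ a} :=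
    nontrivial_of_ne ⟨b, hab.symm⟩ ⟨z, hza⟩ fun h => hzb (congrArg Subtype.val h).symm
  obtain ⟨c, hnd, hmem, hc⟩ := exists_spanning_cycle_of_semicomplete
    (R := fun x y : {v // v ≠ a} => A x y)
    (fun x y hxy => hsc x y x.2 y.2 (Subtype.val_injective.ne hxy)) hS.reflTransGen_subtype
  obtain ⟨t, hrot⟩ := exists_isRotated_cons (mem_map.2 ⟨⟨b, hab.symm⟩, hmem _, rfl⟩)
  refine ⟨_, _, isHamPathOff_of_cycle (hrot.nodup_iff.2 (hnd.map Subtype.val_injective)) ?_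
    fun x => ?_⟩
  · rw [Cycle.coe_eq_coe.2 hrot, ← Cycle.map_coe, Cycle.chain_map]
    exact hc
  · rw [hrot.mem_iff, mem_map]
    exact ⟨by rintro ⟨y, -, rfl⟩; exact y.2, fun hx => ⟨⟨x, hx⟩, hmem _, rfl⟩⟩

end Digraph

theorem statement_4_general (A : V → V → Prop)
    (h2 : TwoStrong A)
    (hone : ∀ x y w z : V, x ≠ y → w ≠ z → ¬ DAdj A x y → ¬ DAdj A w z →
      ({x, y} : Finset V) = ({w, z} : Finset V)) :
    Hamiltonian A := by
  by_cases hsc : ∀ x y : V, x ≠ y → DAdj A x y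
  · have : Nontrivial V := Fintype.one_lt_card_iff_nontrivial.1 (by have := h2.1; omega)
    obtain ⟨c, hnd, hmem, hc⟩ := exists_spanning_cycle_of_semicomplete hsc h2.reflTransGen
    exact hamiltonian_of_cycle hnd hmem hc (by have := h2.1; omega)
  push Not at hsc
  obtain ⟨a, b, hab, hnab⟩ := hsc
  have hadj : ∀ x y, x ≠ y → x ≠ a → x ≠ b → DAdj A x y := fun x y hxy hxa hxb => by
    by_contra h
    have := hone x y a b hxy hab h hnab ▸ Finset.mem_insert_self x {y}
    simp only [Finset.mem_insert, Finset.mem_singleton] at this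
    tauto
  obtain ⟨w, m, hp, hb0, hbm⟩ := exists_isHamPathOff hab (h2.2 a)
    (fun x y hxa hya hxy => if hxb : x = b then (hadj y x hxy.symm hya (hxb ▸ hxy.symm)).symm
      else hadj x y hxy hxa hxb) h2.1
  obtain ⟨z, hza, hzb⟩ := exists_ne_ne_of_two_lt_card h2.1 a b
  obtain ⟨k, hk, -⟩ := hp.exists_eq z hza hzb
  refine hp.hamiltonian_of_twoStrong h2.2 hab (fun h => hnab (.inl h)) (fun h => hnab (.inr h))
    (fun k hk => ⟨?_, ?_⟩) (by omega) hb0 hbm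
  · exact Or.symm (hadj _ a (hp.ne_left k hk) (hp.ne_left k hk) (hp.ne_right k hk))
  · exact Or.symm (hadj _ b (hp.ne_right k hk) (hp.ne_left k hk) (hp.ne_right k hk))

/-- Theorem 3.4: a 2-strong digraph of order n ≥ 3 with at most
one pair of non-adjacent vertices is Hamiltonian. -/
theorem statement_4 (A : V → V → Prop) [DecidableRel A]
    (hloop : ∀ v : V, ¬ A v v)
    (hn : 3 ≤ Fintype.card V)
    (h2 : TwoStrong A)
    (hone : ∀ x y w z : V, x ≠ y → w ≠ z → ¬ DAdj A x y → ¬ DAdj A w z →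
      ({x, y} : Finset V) = ({w, z} : Finset V)) :
    Hamiltonian A :=
  statement_4_general A h2 hone
end

section
/- For every n ≥ 5 there exists a strongly connected non-Hamiltonian digraph of order n which is not 2-strong and has exactly one pair of non-adjacent vertices. -/
variable {V : Type} [Fintype V] [DecidableEq V]

/-- Remark after Theorem 3.4: for every n ≥ 5 there is a strong,
non-Hamiltonian digraph of order n which is not 2-strong and has exactly one
pair of non-adjacent vertices. -/
theorem statement_5 (n : ℕ) (hn : 5 ≤ n) :
    ∃ A : Fin n → Fin n → Prop,
      (∀ v : Fin n, ¬ A v v) ∧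
      DStrong A ∧
      ¬ Hamiltonian A ∧
      ¬ TwoStrong A ∧
      ∃ u v : Fin n, u ≠ v ∧ ¬ DAdj A u v ∧
        ∀ x y : Fin n, x ≠ y → ¬ DAdj A x y →
          ({x, y} : Finset (Fin n)) = ({u, v} : Finset (Fin n)) := by
  have h0 : 0 < n := by omega
  have h1 : 1 < n := by omega
  have h2 : 2 < n := by omega
  set v0 : Fin n := ⟨0, h0⟩ with hv0def
  set v1 : Fin n := ⟨1, h1⟩ with hv1def
  set v2 : Fin n := ⟨2, h2⟩ with hv2def
  set A : Fin n → Fin n → Prop :=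
    fun x y => x ≠ y ∧ ((y = v0 ∨ y = v1) → x = v2) with hAdef
  have hv01 : v0 ≠ v1 := by simp [hv0def, hv1def, Fin.ext_iff]
  have hv02 : v0 ≠ v2 := by simp [hv0def, hv2def, Fin.ext_iff]
  have hv12 : v1 ≠ v2 := by simp [hv1def, hv2def, Fin.ext_iff]
  -- arcs to and from v2
  have hto2 : ∀ u : Fin n, u ≠ v2 → A u v2 := by
    intro u hu
    exact ⟨hu, fun h => by rcases h with h | h <;> simp [hv0def, hv1def, hv2def, Fin.ext_iff] at h⟩
  have hfrom2 : ∀ u : Fin n, u ≠ v2 → A v2 u := by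
    intro u hu
    exact ⟨fun h => hu h.symm, fun _ => rfl⟩
  refine ⟨A, ?_, ?_, ?_, ?_, ?_⟩
  · intro v hv
    exact hv.1 rfl
  · -- strong
    intro u _ v _
    by_cases huv : u = v
    · exact huv ▸ Relation.ReflTransGen.refl
    by_cases hu2 : u = v2
    · subst hu2
      exact Relation.ReflTransGen.single ⟨trivial, trivial, hfrom2 v (fun h => huv h.symm)⟩
    by_cases hv2' : v = v2
    · subst hv2'
      exact Relation.ReflTransGen.single ⟨trivial, trivial, hto2 u hu2⟩
    · exact Relation.ReflTransGen.head ⟨trivial, trivial, hto2 u hu2⟩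
        (Relation.ReflTransGen.single ⟨trivial, trivial, hfrom2 v hv2'⟩)
  · -- not Hamiltonian
    rintro ⟨f, -, hinj, hstep⟩
    have hcard : Fintype.card (Fin n) = n := Fintype.card_fin n
    haveI : NeZero (Fintype.card (Fin n)) := ⟨by omega⟩
    have hsurj : Function.Surjective f := by
      have := (Fintype.bijective_iff_injective_and_card f).mpr
        ⟨hinj, by rw [ZMod.card]⟩
      exact this.surjective
    obtain ⟨i0, hi0⟩ := hsurj v0
    obtain ⟨j0, hj0⟩ := hsurj v1
    have hi : f (i0 - 1 + 1) = v0 := by rw [sub_add_cancel]; exact hi0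
    have hj : f (j0 - 1 + 1) = v1 := by rw [sub_add_cancel]; exact hj0
    have hAi := hstep (i0 - 1)
    have hAj := hstep (j0 - 1)
    rw [hi] at hAi
    rw [hj] at hAj
    have e1 : f (i0 - 1) = v2 := hAi.2 (Or.inl rfl)
    have e2 : f (j0 - 1) = v2 := hAj.2 (Or.inr rfl)
    have : i0 - 1 = j0 - 1 := hinj (e1.trans e2.symm)
    have : i0 - 1 + 1 = j0 - 1 + 1 := by rw [this]
    rw [this, hj] at hi
    exact hv01 hi.symm
  · -- not 2-strong
    rintro ⟨-, h⟩
    have hpath := h v2 v1 hv12 v0 hv02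
    have key : ∀ b : Fin n,
        Relation.ReflTransGen
          (fun a b => a ∈ {v : Fin n | v ≠ v2} ∧ b ∈ {v : Fin n | v ≠ v2} ∧ A a b) v1 b →
        b ≠ v0 := by
      intro b hb
      induction hb with
      | refl => exact fun h => hv01 h.symm
      | tail _ hbc _ =>
        intro hc
        subst hc
        exact hbc.1 (hbc.2.2.2 (Or.inl rfl))
    exact key v0 hpath rfl
  · -- unique non-adjacent pair
    refine ⟨v0, v1, hv01, ?_, ?_⟩
    · rintro (h | h)
      · exact hv02 (h.2 (Or.inr rfl))
      · exact hv12 (h.2 (Or.inl rfl))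
    · intro x y hxy hnadj
      rw [DAdj] at hnadj
      push_neg at hnadj
      obtain ⟨hxy', hyx'⟩ := hnadj
      have hfact : ∀ a b : Fin n, a ≠ b → ¬ A a b → (b = v0 ∨ b = v1) := by
        intro a b hab hnab
        by_contra hb
        exact hnab ⟨hab, fun h => absurd h hb⟩
      have hy := hfact x y hxy hxy'
      have hx := hfact y x (fun h => hxy h.symm) hyx'
      rcases hx with hx | hx <;> rcases hy with hy | hy
      · exact absurd (hx.trans hy.symm) hxy
      · rw [hx, hy]
      · rw [hx, hy, Finset.pair_comm]
      · exact absurd (hx.trans hy.symm) hxy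
end

section
/- Let D be a digraph of order n ≥ 2 such that every vertex x satisfies d⁺(x) ≥ n/2 and d⁻(x) ≥ n/2. Then D is Hamiltonian. -/
variable {V : Type} [Fintype V] [DecidableEq V]

/-!
Let `C = c₀ … c_{M-1}` be a longest cycle and suppose it misses a vertex; let `P = p₀ … p_{s-1}`
be a longest path avoiding `C`, so `s + M ≤ n`. By maximality of `P`, every in-neighbour of `p₀`
and every out-neighbour of `p_{s-1}` lies on `P` or on `C`, and those on `P` close up cycles
inside `P`, so there are fewer than `min s M` of them. If `p_{s-1} → c_i` and `c_j → p₀`, then `P`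
followed by `c_i, …, c_j` is a cycle, so `j - i ≤ M - s - 1` modulo `M`: none of
`c_{i-1}, …, c_{i-s}` is an in-neighbour of `p₀`, and a counting argument on `ℤ/M` bounds the
neighbours on `C` by `M + 1 - s`. Altogether `d⁻(p₀) + d⁺(p_{s-1}) ≤ M + s - 1 < n`.
-/
section Dipath

variable {α : Type}

/-- `q 0, q 1, …, q (L - 1)` is a directed path; the values of `q` from `L` on play no role. -/
def IsDipath (A : α → α → Prop) (L : ℕ) (q : ℕ → α) : Prop :=
  Set.InjOn q (Set.Iio L) ∧ ∀ k, k + 1 < L → A (q k) (q (k + 1))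

def IsLongestDipathIn (A : α → α → Prop) (S : Set α) (L : ℕ) (q : ℕ → α) : Prop :=
  IsDipath A L q ∧ (∀ k < L, q k ∈ S) ∧
    ∀ L' q', IsDipath A L' q' → (∀ k < L', q' k ∈ S) → L' ≤ L

def IsLongestCycle (A : α → α → Prop) (M : ℕ) (f : ZMod M → α) : Prop :=
  IsCycle A M f ∧ ∀ t (g : ZMod t → α), IsCycle A t g → t ≤ M

variable {A : α → α → Prop}

namespace IsDipath

theorem single (z : α) : IsDipath A 1 (fun _ => z) :=
  ⟨fun _ ha _ hb _ => by simp_all, fun _ hk => by omega⟩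

theorem take {L m : ℕ} {q : ℕ → α} (hq : IsDipath A L q) (hm : m ≤ L) : IsDipath A m q :=
  ⟨hq.1.mono (Set.Iio_subset_Iio hm), fun k hk => hq.2 k (by omega)⟩

theorem drop {L : ℕ} {q : ℕ → α} (hq : IsDipath A L q) (j : ℕ) :
    IsDipath A (L - j) (fun k => q (j + k)) := by
  refine ⟨fun a ha b hb hab => ?_, fun k hk => hq.2 (j + k) (by omega)⟩
  simp only [Set.mem_Iio] at ha hb
  have := hq.1 (by simp only [Set.mem_Iio]; omega) (by simp only [Set.mem_Iio]; omega) hab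
  omega

theorem append {s t : ℕ} {p q : ℕ → α} (hp : IsDipath A s p) (hq : IsDipath A t q) (hs : 0 < s)
    (harc : A (p (s - 1)) (q 0)) (hdisj : ∀ a < s, ∀ b < t, p a ≠ q b) :
    IsDipath A (s + t) (fun k => if k < s then p k else q (k - s)) := by
  refine ⟨fun a ha b hb hab => ?_, fun k hk => ?_⟩
  · simp only [Set.mem_Iio] at ha hb
    dsimp only at hab
    split_ifs at hab with has hbs hbs
    · exact hp.1 has hbs hab
    · exact absurd hab (hdisj a has (b - s) (by omega))
    · exact absurd hab.symm (hdisj b hbs (a - s) (by omega))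
    · have := hq.1 (by simp only [Set.mem_Iio]; omega) (by simp only [Set.mem_Iio]; omega) hab
      omega
  · dsimp only
    by_cases hks : k + 1 < s
    · simpa [hks, show k < s by omega] using hp.2 k hks
    by_cases hk' : k + 1 = s
    · obtain rfl : k = s - 1 := by omega
      rwa [if_pos (by omega), if_neg (by omega), show s - 1 + 1 - s = 0 by omega]
    · have := hq.2 (k - s) (by omega)
      rwa [if_neg (by omega), if_neg hks, show k + 1 - s = k - s + 1 by omega]

theorem le_card_of_mem [DecidableEq α] {L : ℕ} {q : ℕ → α} {S : Finset α} (hq : IsDipath A L q)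
    (hS : ∀ k < L, q k ∈ S) : L ≤ S.card := by
  simpa using Finset.card_le_card_of_injOn (s := Finset.range L) q
    (fun k hk => hS k (by simpa using hk)) (by simpa [Set.InjOn] using hq.1)

theorem isCycle {L : ℕ} {q : ℕ → α} (hq : IsDipath A L q) (hL : 2 ≤ L)
    (hclose : A (q (L - 1)) (q 0)) : IsCycle A L (fun z : ZMod L => q z.val) := by
  have : NeZero L := ⟨by omega⟩
  have : Fact (1 < L) := ⟨by omega⟩
  refine ⟨hL, fun a b hab => ZMod.val_injective L (hq.1 (ZMod.val_lt a) (ZMod.val_lt b) hab),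
    fun i => ?_⟩
  show A (q i.val) (q (i + 1).val)
  have hval : (i + 1).val = (i.val + 1) % L := by rw [ZMod.val_add, ZMod.val_one]
  by_cases hi : i.val + 1 < L
  · rw [hval, Nat.mod_eq_of_lt hi]
    exact hq.2 _ hi
  · rw [hval, show i.val + 1 = L by have := ZMod.val_lt i; omega, Nat.mod_self,
      show i.val = L - 1 by have := ZMod.val_lt i; omega]
    exact hclose

theorem exists_cycle_of_arc_to_start {s j : ℕ} {p : ℕ → α} (hp : IsDipath A s p) (hjs : j < s)
    (hj : 0 < j) (hA : A (p j) (p 0)) : ∃ g : ZMod (j + 1) → α, IsCycle A (j + 1) g :=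
  ⟨_, (hp.take hjs).isCycle (by omega) hA⟩

theorem exists_cycle_of_arc_from_end {s j : ℕ} {p : ℕ → α} (hp : IsDipath A s p) (hjs : j + 1 < s)
    (hA : A (p (s - 1)) (p j)) : ∃ g : ZMod (s - j) → α, IsCycle A (s - j) g :=
  ⟨_, (hp.drop j).isCycle (by omega) (by rwa [add_zero, show j + (s - j - 1) = s - 1 by omega])⟩

end IsDipath

namespace IsCycle

theorem le_card [Fintype α] {M : ℕ} {f : ZMod M → α} (hf : IsCycle A M f) :
    M ≤ Fintype.card α := by
  have : NeZero M := ⟨by have := hf.1; omega⟩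
  simpa using Fintype.card_le_of_injective f hf.2.1

theorem isDipath_rotate {M L : ℕ} {f : ZMod M → α} (hf : IsCycle A M f) (i : ZMod M)
    (hL : L ≤ M) : IsDipath A L (fun k => f (i + k)) := by
  refine ⟨fun a ha b hb hab => ?_, fun k _ => by simpa [add_assoc] using hf.2.2 (i + k)⟩
  simp only [Set.mem_Iio] at ha hb
  have := (ZMod.natCast_eq_natCast_iff' a b M).1 (add_left_cancel (hf.2.1 hab))
  rwa [Nat.mod_eq_of_lt (by omega), Nat.mod_eq_of_lt (by omega)] at this

end IsCycle

namespace IsLongestDipathIn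

variable {S : Set α} {s : ℕ} {p : ℕ → α} {z : α}

theorem exists_eq_of_arc_to_start (hp : IsLongestDipathIn A S s p) (hz : z ∈ S)
    (hA : A z (p 0)) : ∃ k < s, p k = z := by
  by_contra! hnew
  have hext := (IsDipath.single z).append hp.1 one_pos hA fun _ _ k hk => (hnew k hk).symm
  have := hp.2.2 _ _ hext fun k _ => by
    split_ifs
    exacts [hz, hp.2.1 _ (by omega)]
  omega

theorem exists_eq_of_arc_from_end (hp : IsLongestDipathIn A S s p) (hs : 0 < s) (hz : z ∈ S)
    (hA : A (p (s - 1)) z) : ∃ k < s, p k = z := by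
  by_contra! hnew
  have hext := hp.1.append (IsDipath.single z) hs hA fun k hk _ _ => hnew k hk
  have := hp.2.2 _ _ hext fun k _ => by
    split_ifs with hk
    exacts [hp.2.1 k hk, hz]
  omega

end IsLongestDipathIn

theorem exists_isLongestDipathIn [DecidableEq α] (A : α → α → Prop) (S : Finset α)
    (hS : S.Nonempty) : ∃ s p, 0 < s ∧ IsLongestDipathIn A S s p := by
  obtain ⟨z, hz⟩ := hS
  obtain ⟨s, ⟨p, hp, hpS⟩, hmax⟩ :=
    BddAbove.exists_isGreatest_of_nonempty (S := {L | ∃ q, IsDipath A L q ∧ ∀ k < L, q k ∈ S})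
      ⟨S.card, fun L ⟨q, hq, hqS⟩ => hq.le_card_of_mem hqS⟩
      ⟨1, fun _ => z, IsDipath.single z, fun _ _ => hz⟩
  exact ⟨s, p, hmax ⟨_, IsDipath.single z, fun _ _ => hz⟩, hp, hpS,
    fun L q hq hqS => hmax ⟨q, hq, hqS⟩⟩

theorem exists_isLongestCycle [Fintype α] {t : ℕ} {g : ZMod t → α} (hg : IsCycle A t g) :
    ∃ M f, IsLongestCycle A M f := by
  obtain ⟨M, ⟨f, hf⟩, hmax⟩ :=
    BddAbove.exists_isGreatest_of_nonempty (S := {t | ∃ g : ZMod t → α, IsCycle A t g})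
      ⟨Fintype.card α, fun t ⟨g, hg⟩ => hg.le_card⟩ ⟨t, g, hg⟩
  exact ⟨M, f, hf, fun t g hg => hmax ⟨g, hg⟩⟩

theorem exists_isCycle [Fintype α] [DecidableEq α] [Nonempty α] (hloop : ∀ v, ¬ A v v)
    (hout : ∀ v, ∃ w, A v w) : ∃ t, ∃ g : ZMod t → α, IsCycle A t g := by
  obtain ⟨s, p, hs, hp⟩ := exists_isLongestDipathIn A Finset.univ Finset.univ_nonempty
  obtain ⟨w, hw⟩ := hout (p (s - 1))
  obtain ⟨j, hjs, rfl⟩ := hp.exists_eq_of_arc_from_end hs (by simp) hw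
  have hj : j ≠ s - 1 := by rintro rfl; exact hloop _ hw
  exact ⟨_, hp.1.exists_cycle_of_arc_from_end (by omega) hw⟩

end Dipath

namespace ZMod

variable {M : ℕ} [NeZero M]

theorem eq_univ_of_forall_sub_one_mem {U : Set (ZMod M)} (hU : U.Nonempty)
    (h : ∀ x ∈ U, x - 1 ∈ U) : U = Set.univ := by
  obtain ⟨u, hu⟩ := hU
  have hk : ∀ k : ℕ, u - k ∈ U := by
    intro k
    induction k with
    | zero => simpa using hu
    | succ k ih => simpa [sub_sub] using h _ ih
  refine Set.eq_univ_of_forall fun x => ?_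
  simpa using hk (u - x).val

theorem card_add_card_add_le_of_sub_notMem {U W : Finset (ZMod M)} (hU : U.Nonempty)
    (hW : W.Nonempty) {s : ℕ} (hs : 1 ≤ s) (h : ∀ i ∈ U, ∀ t : ℕ, 1 ≤ t → t ≤ s → i - t ∉ W) :
    W.card + U.card + s ≤ M + 1 := by
  induction s, hs using Nat.le_induction generalizing U with
  | base =>
    have hdisj : Disjoint W (U.image (· - 1)) := by
      refine Finset.disjoint_right.2 fun x hx hxW => ?_
      obtain ⟨i, hi, rfl⟩ := Finset.mem_image.1 hx
      exact h i hi 1 le_rfl le_rfl (by simpa using hxW)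
    have := (Finset.card_union_of_disjoint hdisj).symm.trans_le (Finset.card_le_univ _)
    rw [Finset.card_image_of_injective _ (sub_left_injective), ZMod.card] at this
    omega
  | succ s hs ih =>
    -- Replacing `U` by `U ∪ (U - 1)` trades one unit of `s` for at least one new element.
    have hgrow : ¬ U.image (· - 1) ⊆ U := by
      intro hsub
      obtain ⟨w, hw⟩ := hW
      have hall := eq_univ_of_forall_sub_one_mem (U := (U : Set (ZMod M))) hU
        fun x hx => hsub (Finset.mem_image_of_mem _ hx)
      exact h (w + 1) (by simp [← Finset.mem_coe, hall]) 1 le_rfl (by omega) (by simpa using hw)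
    obtain ⟨a, ha, haU⟩ := Finset.not_subset.1 hgrow
    have hcard : U.card + 1 ≤ (U ∪ U.image (· - 1)).card := by
      rw [← Finset.card_insert_of_notMem haU]
      exact Finset.card_le_card (Finset.insert_subset (Finset.mem_union_right _ ha)
        Finset.subset_union_left)
    have := ih (U := U ∪ U.image (· - 1)) (hU.mono Finset.subset_union_left)
        fun i hi t ht1 hts => by
      rcases Finset.mem_union.1 hi with hi | hi
      · exact h i hi t ht1 (by omega)
      · obtain ⟨i', hi', rfl⟩ := Finset.mem_image.1 hi
        simpa [sub_sub, add_comm] using h i' hi' (t + 1) (by omega) (by omega)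
    omega

theorem card_add_card_add_le_of_add_val_sub_le {U W : Finset (ZMod M)} (hU : U.Nonempty)
    (hW : W.Nonempty) {s : ℕ} (hs : 1 ≤ s) (h : ∀ i ∈ U, ∀ j ∈ W, s + (j - i).val + 1 ≤ M) :
    W.card + U.card + s ≤ M + 1 := by
  obtain ⟨i₀, hi₀⟩ := hU
  obtain ⟨j₀, hj₀⟩ := hW
  have hsM := h i₀ hi₀ j₀ hj₀
  refine card_add_card_add_le_of_sub_notMem ⟨i₀, hi₀⟩ ⟨j₀, hj₀⟩ hs fun i hi t ht1 hts hmem => ?_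
  have := h i hi _ hmem
  rw [sub_sub_cancel_left, neg_val', val_cast_of_lt (by omega),
    Nat.mod_eq_of_lt (by omega)] at this
  omega

end ZMod

namespace IsLongestCycle

variable {α : Type} {A : α → α → Prop} {M s : ℕ} {f : ZMod M → α} {p : ℕ → α}

/-- `p` followed by the stretch `f i, …, f j` of the cycle closes up into a cycle of length
`s + (j - i).val + 1`. -/
theorem add_val_sub_add_one_le (hf : IsLongestCycle A M f) (hp : IsDipath A s p) (hs : 0 < s)
    (hpf : ∀ k < s, p k ∉ Set.range f) {i j : ZMod M} (hi : A (p (s - 1)) (f i))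
    (hj : A (f j) (p 0)) : s + (j - i).val + 1 ≤ M := by
  have : NeZero M := ⟨by have := hf.1.1; omega⟩
  have hd := ZMod.val_lt (j - i)
  have hq := hp.append (hf.1.isDipath_rotate i (L := (j - i).val + 1) hd) hs (by simpa using hi)
    fun a ha _ _ hab => hpf a ha ⟨_, hab.symm⟩
  refine hf.2 _ _ (hq.isCycle (by omega) ?_)
  rwa [if_neg (by omega), if_pos hs, show s + ((j - i).val + 1) - 1 - s = (j - i).val by omega,
    ZMod.natCast_zmod_val, add_sub_cancel]

variable [Fintype α] [DecidableRel A]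

theorem inDeg_add_one_le [DecidableEq α] [NeZero M] (hloop : ∀ v, ¬ A v v)
    (hf : IsLongestCycle A M f) (hp : IsLongestDipathIn A (Set.range f)ᶜ s p) (hs : 0 < s) :
    inDeg A (p 0) + 1 ≤ (Finset.univ.filter fun i => A (f i) (p 0)).card + min s M := by
  have hsub : Finset.univ.filter (fun z => A z (p 0)) ⊆
      (Finset.univ.filter fun i => A (f i) (p 0)).image f ∪ (Finset.Ico 1 (min s M)).image p := by
    intro z hz
    simp only [Finset.mem_filter, Finset.mem_univ, true_and] at hz
    by_cases hzf : z ∈ Set.range f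
    · obtain ⟨i, rfl⟩ := hzf
      exact Finset.mem_union_left _ (Finset.mem_image_of_mem f (by simpa using hz))
    · obtain ⟨j, hjs, rfl⟩ := hp.exists_eq_of_arc_to_start hzf hz
      have hj : j ≠ 0 := by rintro rfl; exact hloop _ hz
      obtain ⟨g, hg⟩ := hp.1.exists_cycle_of_arc_to_start hjs (by omega) hz
      have := hf.2 _ g hg
      exact Finset.mem_union_right _ (Finset.mem_image_of_mem p (by simp; omega))
  have hsub_card := (Finset.card_le_card hsub).trans (Finset.card_union_le _ _)
  have hcycle_part := Finset.card_image_le (s := Finset.univ.filter fun i => A (f i) (p 0)) (f := f)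
  have hpath_part := Finset.card_image_le (s := Finset.Ico 1 (min s M)) (f := p)
  have hM := hf.1.1
  rw [Nat.card_Ico] at hpath_part
  unfold inDeg
  omega

theorem outDeg_add_one_le [DecidableEq α] [NeZero M] (hloop : ∀ v, ¬ A v v)
    (hf : IsLongestCycle A M f) (hp : IsLongestDipathIn A (Set.range f)ᶜ s p) (hs : 0 < s) :
    outDeg A (p (s - 1)) + 1 ≤
      (Finset.univ.filter fun i => A (p (s - 1)) (f i)).card + min s M := by
  have hsub : Finset.univ.filter (fun z => A (p (s - 1)) z) ⊆
      (Finset.univ.filter fun i => A (p (s - 1)) (f i)).image f ∪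
        (Finset.Ico (s - min s M) (s - 1)).image p := by
    intro z hz
    simp only [Finset.mem_filter, Finset.mem_univ, true_and] at hz
    by_cases hzf : z ∈ Set.range f
    · obtain ⟨i, rfl⟩ := hzf
      exact Finset.mem_union_left _ (Finset.mem_image_of_mem f (by simpa using hz))
    · obtain ⟨j, hjs, rfl⟩ := hp.exists_eq_of_arc_from_end hs hzf hz
      have hj : j ≠ s - 1 := by rintro rfl; exact hloop _ hz
      obtain ⟨g, hg⟩ := hp.1.exists_cycle_of_arc_from_end (by omega) hz
      have := hf.2 _ g hg
      exact Finset.mem_union_right _ (Finset.mem_image_of_mem p (by simp; omega))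
  have hsub_card := (Finset.card_le_card hsub).trans (Finset.card_union_le _ _)
  have hcycle_part :=
    Finset.card_image_le (s := Finset.univ.filter fun i => A (p (s - 1)) (f i)) (f := f)
  have hpath_part := Finset.card_image_le (s := Finset.Ico (s - min s M) (s - 1)) (f := p)
  have hM := hf.1.1
  rw [Nat.card_Ico] at hpath_part
  unfold outDeg
  omega

theorem card_le [DecidableEq α] (hloop : ∀ v, ¬ A v v)
    (hdeg : ∀ x, Fintype.card α ≤ 2 * outDeg A x ∧ Fintype.card α ≤ 2 * inDeg A x)
    (hf : IsLongestCycle A M f) : Fintype.card α ≤ M := by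
  by_contra! hM
  have : NeZero M := ⟨by have := hf.1.1; omega⟩
  have hC : (Finset.univ.image f).card = M := by
    rw [Finset.card_image_of_injective _ hf.1.2.1, Finset.card_univ, ZMod.card]
  obtain ⟨s, p, hs, hp⟩ := exists_isLongestDipathIn A (Finset.univ.image f)ᶜ
    (by rw [← Finset.card_pos, Finset.card_compl]; omega)
  have hsM : s + M ≤ Fintype.card α := by
    have := hp.1.le_card_of_mem hp.2.1
    rw [Finset.card_compl] at this
    omega
  replace hp : IsLongestDipathIn A (Set.range f)ᶜ s p := by simpa using hp
  have hin := inDeg_add_one_le hloop hf hp hs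
  have hout := outDeg_add_one_le hloop hf hp hs
  have hx := (hdeg (p 0)).2
  have hy := (hdeg (p (s - 1))).1
  have hout_ne : (Finset.univ.filter fun i => A (p (s - 1)) (f i)).Nonempty := by
    rw [← Finset.card_pos]; omega
  have hin_ne : (Finset.univ.filter fun i => A (f i) (p 0)).Nonempty := by
    rw [← Finset.card_pos]; omega
  have := ZMod.card_add_card_add_le_of_add_val_sub_le hout_ne hin_ne hs fun i hi j hj =>
    hf.add_val_sub_add_one_le hp.1 hs hp.2.1 (Finset.mem_filter.1 hi).2 (Finset.mem_filter.1 hj).2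
  omega

end IsLongestCycle

/-- Corollary 1.14, Ghouila-Houri type: a digraph of order n ≥ 2
with d⁺(x) ≥ n/2 and d⁻(x) ≥ n/2 for every vertex x is Hamiltonian. -/
theorem statement_8 (A : V → V → Prop) [DecidableRel A]
    (hloop : ∀ v : V, ¬ A v v)
    (hn : 2 ≤ Fintype.card V)
    (h : ∀ x : V, (Fintype.card V : ℝ) / 2 ≤ (outDeg A x : ℝ) ∧
      (Fintype.card V : ℝ) / 2 ≤ (inDeg A x : ℝ)) :
    Hamiltonian A := by
  have hdeg : ∀ x, Fintype.card V ≤ 2 * outDeg A x ∧ Fintype.card V ≤ 2 * inDeg A x := fun x =>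
    ⟨by exact_mod_cast (div_le_iff₀' two_pos).1 (h x).1,
      by exact_mod_cast (div_le_iff₀' two_pos).1 (h x).2⟩
  have : Nonempty V := Fintype.card_pos_iff.1 (by omega)
  have hout : ∀ v, ∃ w, A v w := fun v => by
    obtain ⟨w, hw⟩ := Finset.card_pos.1 (show 0 < outDeg A v by have := (hdeg v).1; omega)
    exact ⟨w, (Finset.mem_filter.1 hw).2⟩
  obtain ⟨t, g, hg⟩ := exists_isCycle hloop hout
  obtain ⟨M, f, hf⟩ := exists_isLongestCycle hg
  obtain rfl : M = Fintype.card V := le_antisymm hf.1.le_card (hf.card_le hloop hdeg)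
  exact ⟨f, hf.1⟩
end

section
/- Let G be a simple (undirected) graph of order n ≥ 3 in which the degree sum of any two non-adjacent vertices is at least n. Then G is Hamiltonian. -/
/-!
Take a longest path `a = p₀, …, pₘ = b`. By maximality every neighbour of `a` and of `b` lies
on it. If `a ∼ b`, or if `deg a + deg b ≥ n > m`, pigeonhole gives a crossover `i` with
`a ∼ pᵢ₊₁` and `pᵢ ∼ b`, and then `a … pᵢ b … pᵢ₊₁ a` is a cycle on the vertices of the path
(a genuine one, since for `n ≥ 3` the same counting as below forces `m ≥ 2`).
A vertex `v` off this cycle has a neighbour on it: otherwise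
`deg v < n - (m + 1)` and `deg a < m + 1` contradict Ore's condition for `v, a`. But opening
the cycle at such a neighbour gives a path longer than the longest one.
-/

namespace SimpleGraph

variable {V : Type*} {G : SimpleGraph V}

section

variable [Fintype V] [DecidableRel G.Adj]

variable (G) in
def OreCondition : Prop :=
  ∀ x y, x ≠ y → ¬ G.Adj x y → Fintype.card V ≤ G.degree x + G.degree y

theorem degree_lt_card_of_forall_adj_mem {s : Finset V} {a : V} (ha : a ∈ s)
    (hN : ∀ w, G.Adj a w → w ∈ s) : G.degree a < s.card := by
  rw [← card_neighborFinset_eq_degree]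
  exact Finset.card_lt_card ⟨fun w hw => hN w ((mem_neighborFinset ..).1 hw),
    fun h => G.irrefl ((mem_neighborFinset ..).1 (h ha))⟩

theorem OreCondition.exists_adj_mem [DecidableEq V] (hG : G.OreCondition) {s : Finset V}
    {a v : V} (ha : a ∈ s) (hNa : ∀ w, G.Adj a w → w ∈ s) (hv : v ∉ s) : ∃ w ∈ s, G.Adj v w := by
  by_contra! hvs
  have hdeg_v := degree_lt_card_of_forall_adj_mem (Finset.mem_compl.2 hv)
    fun w hvw => Finset.mem_compl.2 fun hws => hvs w hws hvw
  have hdeg_a := degree_lt_card_of_forall_adj_mem ha hNa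
  have hsum := hG v a (fun h => hv (h ▸ ha)) (hvs a ha)
  rw [Finset.card_compl] at hdeg_v
  omega

end

namespace Walk

variable {a b u v w : V}

def IsLongestPath (p : G.Walk a b) : Prop :=
  p.IsPath ∧ ∀ ⦃c d : V⦄ (q : G.Walk c d), q.IsPath → q.length ≤ p.length

variable (G) in
theorem exists_isLongestPath [Finite V] [Nonempty V] :
    ∃ (a b : V) (p : G.Walk a b), p.IsLongestPath := by
  have := Fintype.ofFinite V
  let lengths := {n | ∃ (a b : V) (p : G.Walk a b), p.IsPath ∧ p.length = n}
  have hbdd : BddAbove lengths := ⟨Fintype.card V, by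
    rintro _ ⟨a, b, p, hp, rfl⟩
    exact hp.length_lt.le⟩
  have hne : lengths.Nonempty := ⟨0, Classical.arbitrary V, _, nil, .nil, rfl⟩
  obtain ⟨a, b, p, hp, hlen⟩ := Nat.sSup_mem hne hbdd
  exact ⟨a, b, p, hp, fun c d q hq => hlen ▸ le_csSup hbdd ⟨c, d, q, hq, rfl⟩⟩

theorem IsLongestPath.reverse {p : G.Walk a b} (hp : p.IsLongestPath) :
    p.reverse.IsLongestPath :=
  ⟨hp.1.reverse, fun _ _ q hq => (length_reverse p).symm ▸ hp.2 q hq⟩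

theorem IsLongestPath.mem_support_of_adj_start {p : G.Walk a b} (hp : p.IsLongestPath)
    (h : G.Adj a w) : w ∈ p.support := by
  by_contra hw
  have := hp.2 (cons h.symm p) (hp.1.cons hw)
  simp at this

theorem IsLongestPath.mem_support_of_adj_end {p : G.Walk a b} (hp : p.IsLongestPath)
    (h : G.Adj b w) : w ∈ p.support := by
  simpa using hp.reverse.mem_support_of_adj_start h

theorem IsCycle.exists_isPath_length_eq [DecidableEq V] {c : G.Walk u u} (hc : c.IsCycle)
    (hw : w ∈ c.support) (hv : v ∉ c.support) (h : G.Adj v w) :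
    ∃ (x : V) (q : G.Walk v x), q.IsPath ∧ q.length = c.length := by
  have hc' := hc.rotate hw
  refine ⟨_, cons h (c.rotate w hw).tail.reverse, hc'.isPath_tail.reverse.cons ?_, ?_⟩
  · intro hv'
    rw [support_reverse, List.mem_reverse, support_tail_of_not_nil _ hc'.not_nil] at hv'
    exact hv ((mem_support_rotate_iff ..).1 (List.mem_of_mem_tail hv'))
  · rw [length_cons, length_reverse, length_tail_add_one hc'.not_nil, length_rotate]

theorem IsLongestPath.not_adj_of_isCycle [DecidableEq V] {p : G.Walk a b} {c : G.Walk u u}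
    (hp : p.IsLongestPath) (hc : c.IsCycle) (hlen : p.length < c.length)
    (hw : w ∈ c.support) (hv : v ∉ c.support) : ¬ G.Adj v w := fun h => by
  obtain ⟨x, q, hq, hqlen⟩ := hc.exists_isPath_length_eq hw hv h
  exact (hp.2 q hq).not_gt (hqlen ▸ hlen)

theorem IsPath.exists_isCycle_of_crossover {p : G.Walk a b} (hp : p.IsPath) (hlen : 2 ≤ p.length)
    {i : ℕ} (hi : i < p.length) (ha : G.Adj a (p.getVert (i + 1)))
    (hb : G.Adj (p.getVert i) b) :
    ∃ (u : V) (c : G.Walk u u), c.IsCycle ∧ c.length = p.length + 1 ∧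
      ∀ w, w ∈ c.support ↔ w ∈ p.support := by
  let q := (p.drop (i + 1)).reverse.append (cons ha.symm (p.take i))
  have hq : q.support.Perm p.support := by
    simp only [q, support_append, support_reverse, support_cons, List.tail_cons, support_take,
      drop_support_eq_support_drop_min, Nat.min_eq_left hi]
    exact ((List.reverse_perm _).append_right _).trans
      (List.perm_append_comm.trans (List.take_append_drop _ _ ▸ .rfl))
  have hqlen : q.length = p.length := by
    simp only [q, length_append, length_reverse, length_cons, drop_length, take_length]
    omega
  refine ⟨_, cons hb q, ?_, hqlen ▸ rfl, fun w => ?_⟩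
  · have hqp : q.IsPath := IsPath.mk' (hq.nodup_iff.2 hp.support_nodup)
    refine (cons_isCycle_iff q hb).2 ⟨hqp, fun he => ?_⟩
    have := hqp.length_eq_one_of_mem_edges (Sym2.eq_swap ▸ he)
    omega
  · rw [support_cons, List.mem_cons, hq.mem_iff]
    exact or_iff_right_of_imp fun h => h ▸ p.getVert_mem_support i

section

variable [Fintype V] [DecidableRel G.Adj]

theorem exists_crossover (p : G.Walk a b) (ha : ∀ w, G.Adj a w → w ∈ p.support)
    (hb : ∀ w, G.Adj b w → w ∈ p.support) (hlen : p.length < G.degree a + G.degree b) :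
    ∃ i < p.length, G.Adj a (p.getVert (i + 1)) ∧ G.Adj (p.getVert i) b := by
  classical
  let S := (Finset.range p.length).filter fun i => G.Adj a (p.getVert (i + 1))
  let T := (Finset.range p.length).filter fun i => G.Adj (p.getVert i) b
  have hS : G.degree a ≤ S.card := by
    rw [← card_neighborFinset_eq_degree]
    refine (Finset.card_le_card (t := S.image fun i => p.getVert (i + 1)) fun w hw => ?_).trans
      Finset.card_image_le
    rw [mem_neighborFinset] at hw
    obtain ⟨j, rfl, hj⟩ := mem_support_iff_exists_getVert.1 (ha w hw)
    obtain ⟨i, rfl⟩ : ∃ i, j = i + 1 :=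
      Nat.exists_eq_succ_of_ne_zero fun h => G.irrefl (by rwa [h, getVert_zero] at hw)
    exact Finset.mem_image_of_mem _ (Finset.mem_filter.2 ⟨Finset.mem_range.2 hj, hw⟩)
  have hT : G.degree b ≤ T.card := by
    rw [← card_neighborFinset_eq_degree]
    refine (Finset.card_le_card (t := T.image p.getVert) fun w hw => ?_).trans Finset.card_image_le
    rw [mem_neighborFinset] at hw
    obtain ⟨i, rfl, hi⟩ := mem_support_iff_exists_getVert.1 (hb w hw)
    have hi' : i ≠ p.length := fun h => G.irrefl (by rwa [h, getVert_length] at hw)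
    exact Finset.mem_image_of_mem _ (Finset.mem_filter.2 ⟨Finset.mem_range.2 (by omega), hw.symm⟩)
  have hST : (S ∪ T).card ≤ p.length :=
    (Finset.card_le_card (Finset.union_subset (Finset.filter_subset ..)
      (Finset.filter_subset ..))).trans_eq (Finset.card_range _)
  obtain ⟨i, hi⟩ : (S ∩ T).Nonempty := by
    rw [← Finset.card_pos]
    have := Finset.card_union_add_card_inter S T
    omega
  simp only [S, T, Finset.mem_inter, Finset.mem_filter, Finset.mem_range] at hi
  exact ⟨i, hi.1.1, hi.1.2, hi.2.2⟩

theorem IsLongestPath.two_le_length [DecidableEq V] (hG : G.OreCondition)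
    (hn : 3 ≤ Fintype.card V) {p : G.Walk a b} (hp : p.IsLongestPath) : 2 ≤ p.length := by
  by_contra! hlen
  have hends : ∀ w ∈ p.support, w = a ∨ w = b := by
    intro w hw
    obtain ⟨j, rfl, hj⟩ := mem_support_iff_exists_getVert.1 hw
    rcases Nat.le_one_iff_eq_zero_or_eq_one.1 (by omega : j ≤ 1) with rfl | rfl
    · exact .inl p.getVert_zero
    · exact .inr (p.getVert_of_length_le (by omega))
  obtain ⟨v, -, hv⟩ := Finset.exists_mem_notMem_of_card_lt_card (t := Finset.univ)
    (s := p.support.toFinset) (by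
      have := p.support.toFinset_card_le
      rw [length_support] at this
      rw [Finset.card_univ]
      omega)
  obtain ⟨w, hw, hvw⟩ := hG.exists_adj_mem (List.mem_toFinset.2 p.start_mem_support)
    (fun w h => List.mem_toFinset.2 (hp.mem_support_of_adj_start h)) hv
  rcases hends w (List.mem_toFinset.1 hw) with rfl | rfl
  · exact hv (List.mem_toFinset.2 (hp.mem_support_of_adj_start hvw.symm))
  · exact hv (List.mem_toFinset.2 (hp.mem_support_of_adj_end hvw.symm))

theorem IsLongestPath.exists_isCycle [DecidableEq V] (hG : G.OreCondition)
    (hn : 3 ≤ Fintype.card V) {p : G.Walk a b} (hp : p.IsLongestPath) :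
    ∃ (u : V) (c : G.Walk u u), c.IsCycle ∧ c.length = p.length + 1 ∧
      ∀ w, w ∈ c.support ↔ w ∈ p.support := by
  have hlen := hp.two_le_length hG hn
  obtain ⟨i, hi, ha, hb⟩ :
      ∃ i < p.length, G.Adj a (p.getVert (i + 1)) ∧ G.Adj (p.getVert i) b := by
    by_cases hab : G.Adj a b
    · refine ⟨p.length - 1, by omega, ?_, ?_⟩
      · rwa [Nat.sub_add_cancel (by omega), getVert_length]
      · simpa [Nat.sub_add_cancel (by omega : 1 ≤ p.length)] using
          p.adj_getVert_succ (i := p.length - 1) (by omega)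
    · have hne : a ≠ b := by
        rintro rfl
        have := (isPath_iff_nil.1 hp.1).length_eq_zero
        omega
      exact p.exists_crossover (fun _ => hp.mem_support_of_adj_start)
        (fun _ => hp.mem_support_of_adj_end) (hp.1.length_lt.trans_le (hG a b hne hab))
  exact hp.1.exists_isCycle_of_crossover hlen hi ha hb

end

theorem IsCycle.isHamiltonianCycle_of_forall_mem_support [DecidableEq V] {u : V}
    {c : G.Walk u u} (hc : c.IsCycle) (hall : ∀ v, v ∈ c.support) : c.IsHamiltonianCycle := by
  refine ⟨hc, hc.isPath_tail.isHamiltonian_of_mem fun v => ?_⟩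
  rw [support_tail_of_not_nil _ hc.not_nil]
  rcases eq_or_ne v u with rfl | hvu
  · exact end_mem_tail_support hc.not_nil
  · exact (List.mem_cons.1 (c.cons_tail_support ▸ hall v)).resolve_left hvu

end Walk

end SimpleGraph

/-- Ore's theorem: a simple graph of order n ≥ 3 in which any
two non-adjacent vertices have degree sum at least n is Hamiltonian. -/
theorem statement_18 {V : Type} [Fintype V] [DecidableEq V]
    (G : SimpleGraph V) [DecidableRel G.Adj]
    (hn : 3 ≤ Fintype.card V)
    (hdeg : ∀ x y : V, x ≠ y → ¬ G.Adj x y →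
      Fintype.card V ≤ G.degree x + G.degree y) :
    G.IsHamiltonian := by
  intro _
  have hG : G.OreCondition := hdeg
  have : Nonempty V := Fintype.card_pos_iff.1 (by omega)
  obtain ⟨a, b, p, hp⟩ := SimpleGraph.Walk.exists_isLongestPath G
  obtain ⟨u, c, hc, hclen, hcp⟩ := hp.exists_isCycle hG hn
  refine ⟨u, c, hc.isHamiltonianCycle_of_forall_mem_support fun v => ?_⟩
  by_contra hv
  obtain ⟨w, hw, hvw⟩ := hG.exists_adj_mem (s := c.support.toFinset)
    (List.mem_toFinset.2 ((hcp a).2 p.start_mem_support))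
    (fun w h => List.mem_toFinset.2 ((hcp w).2 (hp.mem_support_of_adj_start h)))
    (mt List.mem_toFinset.1 hv)
  exact hp.not_adj_of_isCycle hc (by omega) (List.mem_toFinset.1 hw) hv hvw
end
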